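/- arXiv:math/0308110 — 8 statements merged into one kernel-verified Lean document; each statement's English description precedes it below -/
import Mathlib

section
/- For every n ≥ k ≥ 1, every skew-Hermitian matrix X ∈ ℂ^{n×n} (X† = −X), and every Ψ ∈ ℂ^{n×k} with Ψ†Ψ = 1_k, one has ‖exp(X)·Ψ − Ψ‖_F ≤ ‖X‖_F. Equivalently, with chordal distance d = ‖exp(X)Ψ − Ψ‖_F and geodesic quantity r = (1/√2)‖X‖_F on the complex Stiefel manifold, (1/√2)·d ≤ r. -/
open Matrix

/-- The Frobenius norm of a complex matrix. -/
noncomputable def frobNorm {m n : Type*} [Fintype m] [Fintype n]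
    (M : Matrix m n ℂ) : ℝ :=
  Real.sqrt (∑ i, ∑ j, ‖M i j‖ ^ 2)

/-!
The curve `t ↦ exp (t X)` runs from `1` to `exp X` with velocity `exp (t X) X`. Since `X` is
skew-Hermitian, `exp (t X)` is unitary, and left multiplication by a matrix with orthonormal
columns preserves the Frobenius norm; so the velocity has norm `‖X‖_F` and the mean value
inequality gives `‖exp X - 1‖_F ≤ ‖X‖_F`. Right multiplication by `Ψ` cannot increase the
Frobenius norm either, because `‖M‖² = ‖MΨ‖² + ‖M (1 - ΨΨᴴ)‖²`.
-/

namespace Matrix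

attribute [local instance] frobeniusSeminormedAddCommGroup frobeniusNormedRing
  frobeniusNormedAlgebra

variable {𝕜 : Type*} [RCLike 𝕜] {l m n : Type*} [Fintype l] [Fintype m] [Fintype n]

theorem frobenius_norm_sq_eq_sum (M : Matrix m n 𝕜) : ‖M‖ ^ 2 = ∑ i, ∑ j, ‖M i j‖ ^ 2 := by
  rw [frobenius_norm_def, ← Real.rpow_natCast, ← Real.rpow_mul (by positivity)]
  norm_num

theorem frobenius_norm_sq_eq_re_trace (M : Matrix m n 𝕜) :
    ‖M‖ ^ 2 = RCLike.re (Mᴴ * M).trace := by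
  rw [frobenius_norm_sq_eq_sum, Finset.sum_comm, trace, map_sum]
  refine Finset.sum_congr rfl fun j _ => ?_
  simp only [diag_apply, mul_apply, conjTranspose_apply, RCLike.star_def, RCLike.conj_mul,
    map_sum]
  norm_cast

theorem frobenius_norm_isometry_mul [DecidableEq m] {U : Matrix l m 𝕜} (hU : Uᴴ * U = 1)
    (M : Matrix m n 𝕜) : ‖U * M‖ = ‖M‖ := by
  refine (pow_left_inj₀ (norm_nonneg _) (norm_nonneg _) two_ne_zero).1 ?_
  rw [frobenius_norm_sq_eq_re_trace, frobenius_norm_sq_eq_re_trace, conjTranspose_mul,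
    Matrix.mul_assoc, ← Matrix.mul_assoc Uᴴ, hU, Matrix.one_mul]

theorem frobenius_norm_sq_eq_mul_isometry_add [DecidableEq m] [DecidableEq n]
    (M : Matrix l m 𝕜) {Ψ : Matrix m n 𝕜} (hΨ : Ψᴴ * Ψ = 1) :
    ‖M‖ ^ 2 = ‖M * Ψ‖ ^ 2 + ‖M * (1 - Ψ * Ψᴴ)‖ ^ 2 := by
  set P := Ψ * Ψᴴ
  have hP_idem : P * P = P := by
    rw [Matrix.mul_assoc, ← Matrix.mul_assoc Ψᴴ, hΨ, Matrix.one_mul]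
  have hQ_herm : (1 - P)ᴴ = 1 - P := by
    rw [conjTranspose_sub, conjTranspose_one, conjTranspose_mul, conjTranspose_conjTranspose]
  have hQ_idem : (1 - P) * (1 - P) = 1 - P := by
    rw [sub_mul, mul_sub, mul_sub, hP_idem]; simp
  have hP_trace : (Ψᴴ * Mᴴ * (M * Ψ)).trace = (Mᴴ * M * P).trace := by
    rw [Matrix.mul_assoc, trace_mul_comm]
    simp only [P, Matrix.mul_assoc]
  have hQ_trace : ((1 - P) * Mᴴ * (M * (1 - P))).trace = (Mᴴ * M * (1 - P)).trace := by
    rw [Matrix.mul_assoc, trace_mul_comm, Matrix.mul_assoc, Matrix.mul_assoc, hQ_idem,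
      Matrix.mul_assoc]
  simp only [frobenius_norm_sq_eq_re_trace, ← map_add]
  rw [conjTranspose_mul, conjTranspose_mul, hQ_herm, hP_trace, hQ_trace, ← trace_add,
    ← Matrix.mul_add, add_sub_cancel, Matrix.mul_one]

theorem frobenius_norm_mul_isometry_le [DecidableEq m] [DecidableEq n] (M : Matrix l m 𝕜)
    {Ψ : Matrix m n 𝕜} (hΨ : Ψᴴ * Ψ = 1) : ‖M * Ψ‖ ≤ ‖M‖ := by
  refine (pow_le_pow_iff_left₀ (norm_nonneg _) (norm_nonneg _) two_ne_zero).1 ?_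
  rw [frobenius_norm_sq_eq_mul_isometry_add M hΨ]
  exact le_add_of_nonneg_right (sq_nonneg _)

theorem frobenius_norm_exp_sub_one_le [DecidableEq m] {X : Matrix m m 𝕜} (hX : Xᴴ = -X) :
    ‖NormedSpace.exp X - 1‖ ≤ ‖X‖ := by
  have hU (t : ℝ) : (NormedSpace.exp (t • X))ᴴ * NormedSpace.exp (t • X) = 1 :=
    Unitary.star_mul_self_of_mem <| NormedSpace.exp_mem_unitary_of_mem_skewAdjoint <|
      skewAdjoint.smul_mem t (skewAdjoint.mem_iff.2 hX)
  simpa using norm_image_sub_le_of_norm_deriv_le_segment_01'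
    (f := fun t : ℝ => NormedSpace.exp (t • X))
    (fun t _ => (hasDerivAt_exp_smul_const X t).hasDerivWithinAt)
    (fun t _ => (frobenius_norm_isometry_mul (hU t) X).le)

end Matrix

section frobNorm

attribute [local instance] frobeniusSeminormedAddCommGroup

variable {l m n : Type*} [Fintype l] [Fintype m] [Fintype n]

theorem frobNorm_eq_frobenius_norm (M : Matrix m n ℂ) : frobNorm M = ‖M‖ := by
  rw [frobNorm, ← frobenius_norm_sq_eq_sum, Real.sqrt_sq (norm_nonneg _)]

theorem frobNorm_mul_isometry_le [DecidableEq m] [DecidableEq n] (M : Matrix l m ℂ)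
    {Ψ : Matrix m n ℂ} (hΨ : Ψᴴ * Ψ = 1) : frobNorm (M * Ψ) ≤ frobNorm M := by
  simpa only [frobNorm_eq_frobenius_norm] using frobenius_norm_mul_isometry_le M hΨ

theorem frobNorm_exp_sub_one_le [DecidableEq m] {X : Matrix m m ℂ} (hX : Xᴴ = -X) :
    frobNorm (NormedSpace.exp X - 1) ≤ frobNorm X := by
  simpa only [frobNorm_eq_frobenius_norm] using frobenius_norm_exp_sub_one_le hX

end frobNorm

theorem stiefel_chordal_le_geodesic_general (n k : ℕ)
    (X : Matrix (Fin n) (Fin n) ℂ) (hX : Xᴴ = -X)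
    (Ψ : Matrix (Fin n) (Fin k) ℂ) (hΨ : Ψᴴ * Ψ = 1) :
    frobNorm (NormedSpace.exp X * Ψ - Ψ) ≤ frobNorm X :=
  calc frobNorm (NormedSpace.exp X * Ψ - Ψ)
      = frobNorm ((NormedSpace.exp X - 1) * Ψ) := by rw [Matrix.sub_mul, Matrix.one_mul]
    _ ≤ frobNorm (NormedSpace.exp X - 1) := frobNorm_mul_isometry_le _ hΨ
    _ ≤ frobNorm X := frobNorm_exp_sub_one_le hX

/-- On the complex Stiefel manifold, the chordal distance is bounded by `√2` times the
geodesic distance: for skew-Hermitian `X` and `Ψ` with `ΨᴴΨ = 1`,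
`‖exp(X)Ψ − Ψ‖_F ≤ ‖X‖_F`, i.e. `(1/√2) dᵛ ≤ rᵛ`. -/
theorem stiefel_chordal_le_geodesic (n k : ℕ) (hk : 1 ≤ k) (hkn : k ≤ n)
    (X : Matrix (Fin n) (Fin n) ℂ) (hX : Xᴴ = -X)
    (Ψ : Matrix (Fin n) (Fin k) ℂ) (hΨ : Ψᴴ * Ψ = 1) :
    frobNorm (NormedSpace.exp X * Ψ - Ψ) ≤ frobNorm X :=
  stiefel_chordal_le_geodesic_general n k X hX Ψ hΨ
end

section
/- Let A ∈ ℂ^{n×n} be skew-Hermitian with eigenvalues i·a₁, …, i·aₙ where each aⱼ is real and satisfies |aⱼ| ≤ π. Then ‖1_n − exp(A)‖_F ≥ (2/π)·‖A‖_F. Equivalently, on the unitary group U(n) = V_{n,n} the geodesic distance r = (1/√2)‖A‖_F and the chordal distance d = ‖1 − exp A‖_F satisfy r ≤ (π/(2√2))·d. -/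
open Matrix

/-!
Conjugating by the unitary `V` changes neither Frobenius norm, and `exp A` is the conjugate of
the diagonal matrix `diag (exp (i aⱼ))`. So both sides are computed eigenvalue by eigenvalue,
and the inequality reduces to `|1 - exp (i x)| = 2 |sin (x / 2)| ≥ (2 / π) |x|` for `|x| ≤ π`,
which is Jordan's inequality `sin t ≥ (2 / π) t` on `[0, π / 2]`.
-/

section FrobNorm

variable {m n : Type*} [Fintype m] [Fintype n]

lemma sum_norm_sq_eq_re_trace_conjTranspose_mul (M : Matrix m n ℂ) :
    ∑ i, ∑ j, ‖M i j‖ ^ 2 = (trace (Mᴴ * M)).re := by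
  simp only [trace, diag, mul_apply, conjTranspose_apply, Complex.re_sum]
  rw [Finset.sum_comm]
  refine Finset.sum_congr rfl fun i _ => Finset.sum_congr rfl fun j _ => ?_
  rw [Complex.star_def, mul_comm, Complex.mul_conj, Complex.normSq_eq_norm_sq]
  norm_cast

lemma frobNorm_unitary_conj [DecidableEq n] {V : Matrix n n ℂ} (hV : V ∈ unitaryGroup n ℂ)
    (M : Matrix n n ℂ) : frobNorm (V * M * Vᴴ) = frobNorm M := by
  have hVV : Vᴴ * V = 1 := hV.1
  have hconj : (V * M * Vᴴ)ᴴ * (V * M * Vᴴ) = V * (Mᴴ * M) * Vᴴ := by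
    simp only [conjTranspose_mul, conjTranspose_conjTranspose, Matrix.mul_assoc]
    rw [← Matrix.mul_assoc Vᴴ V, hVV, Matrix.one_mul]
  unfold frobNorm
  rw [sum_norm_sq_eq_re_trace_conjTranspose_mul, sum_norm_sq_eq_re_trace_conjTranspose_mul,
    hconj, trace_mul_cycle, ← Matrix.mul_assoc, hVV, Matrix.one_mul]

lemma mul_frobNorm_le_of_forall_mul_norm_le {M N : Matrix m n ℂ} {c : ℝ} (hc : 0 ≤ c)
    (h : ∀ i j, c * ‖M i j‖ ≤ ‖N i j‖) : c * frobNorm M ≤ frobNorm N := by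
  unfold frobNorm
  rw [← Real.sqrt_sq hc, ← Real.sqrt_mul (sq_nonneg c), Finset.mul_sum]
  refine Real.sqrt_le_sqrt (Finset.sum_le_sum fun i _ => ?_)
  rw [Finset.mul_sum]
  refine Finset.sum_le_sum fun j _ => ?_
  rw [← mul_pow]
  exact pow_le_pow_left₀ (by positivity) (h i j) 2

end FrobNorm

section UnitaryConj

variable {n : Type*} [Fintype n] [DecidableEq n] {V : Matrix n n ℂ}

lemma exp_unitary_conj (hV : V ∈ unitaryGroup n ℂ) (D : Matrix n n ℂ) :
    NormedSpace.exp (V * D * Vᴴ) = V * NormedSpace.exp D * Vᴴ := by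
  have hVinv : V⁻¹ = Vᴴ := inv_eq_right_inv hV.2
  rw [← hVinv, exp_conj V D ⟨Unitary.toUnits ⟨V, hV⟩, rfl⟩]

lemma one_sub_unitary_conj (hV : V ∈ unitaryGroup n ℂ) (D : Matrix n n ℂ) :
    1 - V * D * Vᴴ = V * (1 - D) * Vᴴ := by
  have hVV : V * Vᴴ = 1 := hV.2
  rw [Matrix.mul_sub, Matrix.sub_mul, Matrix.mul_one, hVV]

lemma exp_diagonal_complex (d : n → ℂ) :
    NormedSpace.exp (diagonal d) = diagonal fun j => Complex.exp (d j) := by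
  rw [exp_diagonal]
  congr 1
  funext j
  rw [Pi.exp_def, Complex.exp_eq_exp_ℂ]

end UnitaryConj

lemma two_div_pi_mul_abs_le_norm_one_sub_exp_mul_I {x : ℝ} (hx : |x| ≤ Real.pi) :
    2 / Real.pi * |x| ≤ ‖1 - Complex.exp (x * Complex.I)‖ := by
  have hchord : ‖1 - Complex.exp (x * Complex.I)‖ = 2 * Real.sin (|x| / 2) := by
    rw [norm_sub_rev, mul_comm, Complex.norm_exp_I_mul_ofReal_sub_one, norm_mul,
      Real.norm_two, Real.norm_eq_abs, show |x| / 2 = |x / 2| by rw [abs_div, abs_two],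
      Real.abs_sin_eq_sin_abs_of_abs_le_pi (by rw [abs_div, abs_two]; linarith [Real.pi_pos])]
  have hjordan := Real.mul_le_sin (x := |x| / 2) (by positivity) (by linarith)
  rw [hchord]
  linarith

/-- On the unitary group `U(n)`, the geodesic distance is bounded by `π/(2√2)` times the
chordal distance: if `A` is skew-Hermitian with eigenvalues `i·aⱼ`, `|aⱼ| ≤ π`, then
`‖1 − exp A‖_F ≥ (2/π)‖A‖_F`. -/
theorem unitary_geodesic_le_chordal (n : ℕ) (A : Matrix (Fin n) (Fin n) ℂ)
    (a : Fin n → ℝ) (V : Matrix (Fin n) (Fin n) ℂ) (hV : V ∈ Matrix.unitaryGroup (Fin n) ℂ)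
    (hA : A = V * Matrix.diagonal (fun j => (a j : ℂ) * Complex.I) * Vᴴ)
    (ha : ∀ j, |a j| ≤ Real.pi) :
    (2 / Real.pi) * frobNorm A ≤ frobNorm (1 - NormedSpace.exp A) := by
  have hchord : 1 - NormedSpace.exp A
      = V * diagonal (fun j => 1 - Complex.exp ((a j : ℂ) * Complex.I)) * Vᴴ := by
    rw [hA, exp_unitary_conj hV, exp_diagonal_complex, one_sub_unitary_conj hV,
      ← diagonal_one, diagonal_sub]
  rw [hchord, hA, frobNorm_unitary_conj hV, frobNorm_unitary_conj hV]
  refine mul_frobNorm_le_of_forall_mul_norm_le (by positivity) fun i j => ?_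
  rcases eq_or_ne i j with rfl | hij
  · simpa using two_div_pi_mul_abs_le_norm_one_sub_exp_mul_I (ha i)
  · simp [diagonal_apply_ne _ hij]
end

section
/- For all natural numbers n ≥ k ≥ 1, one has (2√π)^k · Γ(k(2n−k)/2 + 1) ≥ ∏_{i=n−k+1}^{n} Γ(i). Equivalently, the total volume of the complex Stiefel manifold, vol V_{k,n} = ∏_{i=n−k+1}^{n} 2π^i/(i−1)!, is at least the volume |B^D| = π^{D/2}/Γ(D/2+1) of the unit ball in ℝ^D with D = k(2n−k), i.e. vol V_{k,n}/|B^{k(2n−k)}| ≥ 1. -/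
/-!
Since `log ∘ Γ` is convex on `(0, ∞)` and `Γ 1 = 1`, the function `x ↦ Γ (1 + x)` is
supermultiplicative on `[0, ∞)`. Writing `Γ i = Γ (1 + (i - 1))` and using
`∑_{i = n-k+1}^{n} (i - 1) + k / 2 = D / 2`, this gives `∏ Γ i · Γ (1 + k / 2) ≤ Γ (D / 2 + 1)`,
while `Γ (1 + k / 2) ≥ Γ (3 / 2) ^ k = (√π / 2) ^ k`. The volume ratio equals
`(2√π)^k Γ (D / 2 + 1) / ∏ Γ i`, so both claims are the same inequality.
-/

open Real Finset

namespace Real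

theorem Gamma_one_add_le_rpow {x z : ℝ} (hx : 0 ≤ x) (hxz : x ≤ z) (hz : 0 < z) :
    Gamma (1 + x) ≤ Gamma (1 + z) ^ (x / z) := by
  rcases hx.eq_or_lt with rfl | hx
  · simp
  rcases hxz.eq_or_lt with rfl | hxz
  · simp [hz.ne']
  have key := Gamma_mul_add_mul_le_rpow_Gamma_mul_rpow_Gamma (s := 1 + z) (t := 1)
    (a := x / z) (b := 1 - x / z) (by linarith) one_pos (by positivity)
    (by rw [sub_pos, div_lt_one hz]; exact hxz) (by ring)
  have harg : x / z * (1 + z) + (1 - x / z) * 1 = 1 + x := by field_simp; ring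
  rwa [Gamma_one, one_rpow, harg, mul_one] at key

theorem Gamma_one_add_mul_Gamma_one_add_le {x y : ℝ} (hx : 0 ≤ x) (hy : 0 ≤ y) :
    Gamma (1 + x) * Gamma (1 + y) ≤ Gamma (1 + (x + y)) := by
  rcases (add_nonneg hx hy).eq_or_lt with hxy | hxy
  · obtain ⟨rfl, rfl⟩ : x = 0 ∧ y = 0 := ⟨by linarith, by linarith⟩
    simp
  have hΓ : 0 < Gamma (1 + (x + y)) := Gamma_pos_of_pos (by linarith)
  calc Gamma (1 + x) * Gamma (1 + y)
      ≤ Gamma (1 + (x + y)) ^ (x / (x + y)) * Gamma (1 + (x + y)) ^ (y / (x + y)) :=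
        mul_le_mul (Gamma_one_add_le_rpow hx (by linarith) hxy)
          (Gamma_one_add_le_rpow hy (by linarith) hxy) (Gamma_pos_of_pos (by linarith)).le
          (by positivity)
    _ = Gamma (1 + (x + y)) := by
        rw [← rpow_add hΓ, ← add_div, div_self hxy.ne', rpow_one]

theorem prod_Gamma_one_add_le {ι : Type*} (s : Finset ι) {f : ι → ℝ} (hf : ∀ i ∈ s, 0 ≤ f i) :
    ∏ i ∈ s, Gamma (1 + f i) ≤ Gamma (1 + ∑ i ∈ s, f i) := by
  classical
  induction s using Finset.induction_on with
  | empty => simp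
  | insert a s ha ih =>
    rw [prod_insert ha, sum_insert ha]
    have hfa : 0 ≤ f a := hf a (mem_insert_self a s)
    have hfs : ∀ i ∈ s, 0 ≤ f i := fun i hi ↦ hf i (mem_insert_of_mem hi)
    calc Gamma (1 + f a) * ∏ i ∈ s, Gamma (1 + f i)
        ≤ Gamma (1 + f a) * Gamma (1 + ∑ i ∈ s, f i) :=
          mul_le_mul_of_nonneg_left (ih hfs) (Gamma_pos_of_pos (by linarith)).le
      _ ≤ Gamma (1 + (f a + ∑ i ∈ s, f i)) :=
          Gamma_one_add_mul_Gamma_one_add_le hfa (sum_nonneg hfs)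

theorem sqrt_pi_div_two_pow_le_Gamma (k : ℕ) : (√π / 2) ^ k ≤ Gamma (1 + k / 2) := by
  have hGamma : Gamma (1 + 1 / 2) = √π / 2 := by
    rw [add_comm, Gamma_add_one (by norm_num), Gamma_one_half_eq]
    ring
  have h := prod_Gamma_one_add_le (range k) (f := fun _ ↦ (1 / 2 : ℝ)) (fun _ _ ↦ by norm_num)
  rwa [prod_const, sum_const, card_range, nsmul_eq_mul, hGamma, mul_one_div] at h

end Real

theorem Finset.sum_Icc_id_mul_two (m k : ℕ) :
    (∑ i ∈ Icc (m + 1) (m + k), i) * 2 = k * (2 * m + k + 1) := by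
  induction k with
  | zero => simp
  | succ k ih =>
    rw [← add_assoc m k 1, sum_Icc_succ_top (by omega), add_mul, ih]
    ring

theorem sum_Icc_sub_one_add_half (m k : ℕ) :
    ∑ i ∈ Icc (m + 1) (m + k), ((i : ℝ) - 1) + k / 2 = k * (2 * m + k) / 2 := by
  have hsum := congrArg (Nat.cast (R := ℝ)) (sum_Icc_id_mul_two m k)
  push_cast at hsum
  rw [sum_sub_distrib, sum_const, Nat.card_Icc, nsmul_one]
  push_cast [show m + k + 1 - (m + 1) = k by omega]
  linear_combination hsum / 2

theorem prod_Gamma_Icc_pos (m k : ℕ) : 0 < ∏ i ∈ Icc (m + 1) (m + k), Gamma i :=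
  prod_pos fun i hi ↦ Gamma_pos_of_pos (Nat.cast_pos.2 (by grind))

theorem prod_Gamma_Icc_mul_Gamma_le (m k : ℕ) :
    (∏ i ∈ Icc (m + 1) (m + k), Gamma i) * Gamma (1 + k / 2)
      ≤ Gamma (k * (2 * m + k) / 2 + 1) := by
  have hpos : ∀ i ∈ Icc (m + 1) (m + k), (0 : ℝ) ≤ i - 1 := fun i hi ↦
    sub_nonneg.2 (Nat.one_le_cast.2 (by grind))
  calc (∏ i ∈ Icc (m + 1) (m + k), Gamma i) * Gamma (1 + k / 2)
      = (∏ i ∈ Icc (m + 1) (m + k), Gamma (1 + (i - 1))) * Gamma (1 + k / 2) := by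
        simp only [add_sub_cancel]
    _ ≤ Gamma (1 + ∑ i ∈ Icc (m + 1) (m + k), ((i : ℝ) - 1)) * Gamma (1 + k / 2) :=
        mul_le_mul_of_nonneg_right (prod_Gamma_one_add_le _ hpos)
          (Gamma_pos_of_pos (by positivity)).le
    _ ≤ Gamma (1 + (∑ i ∈ Icc (m + 1) (m + k), ((i : ℝ) - 1) + k / 2)) :=
        Gamma_one_add_mul_Gamma_one_add_le (sum_nonneg hpos) (by positivity)
    _ = Gamma (k * (2 * m + k) / 2 + 1) := by rw [sum_Icc_sub_one_add_half, add_comm]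

theorem prod_Gamma_Icc_le (m k : ℕ) :
    ∏ i ∈ Icc (m + 1) (m + k), Gamma i ≤ (2 * √π) ^ k * Gamma (k * (2 * m + k) / 2 + 1) := by
  have hsqrt : (2 * √π) ^ k * (√π / 2) ^ k = π ^ k := by
    rw [← mul_pow]
    congr 1
    field_simp
    exact sq_sqrt pi_pos.le
  have hP := prod_Gamma_Icc_pos m k
  calc ∏ i ∈ Icc (m + 1) (m + k), Gamma i
      ≤ π ^ k * ∏ i ∈ Icc (m + 1) (m + k), Gamma i :=
        le_mul_of_one_le_left hP.le (one_le_pow₀ (by linarith [pi_gt_three]))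
    _ = (2 * √π) ^ k * ((∏ i ∈ Icc (m + 1) (m + k), Gamma i) * (√π / 2) ^ k) := by
        rw [mul_comm _ ((√π / 2) ^ k), ← mul_assoc, hsqrt]
    _ ≤ (2 * √π) ^ k * ((∏ i ∈ Icc (m + 1) (m + k), Gamma i) * Gamma (1 + k / 2)) := by
        gcongr
        exact sqrt_pi_div_two_pow_le_Gamma k
    _ ≤ (2 * √π) ^ k * Gamma (k * (2 * m + k) / 2 + 1) := by
        gcongr
        exact prod_Gamma_Icc_mul_Gamma_le m k

theorem prod_two_mul_pi_pow_div_factorial_Icc (m k : ℕ) :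
    ∏ i ∈ Icc (m + 1) (m + k), 2 * π ^ i / ((i - 1).factorial : ℝ)
      = (2 * √π) ^ k * √π ^ (k * (2 * m + k)) / ∏ i ∈ Icc (m + 1) (m + k), Gamma i := by
  have hfactor : ∀ i ∈ Icc (m + 1) (m + k),
      2 * π ^ i / ((i - 1).factorial : ℝ) = 2 * √π ^ (i * 2) / Gamma i := fun i hi ↦ by
    have hi : 1 ≤ i := by grind
    rw [pow_mul', sq_sqrt pi_pos.le, ← Gamma_nat_eq_factorial, Nat.cast_sub hi, Nat.cast_one,
      sub_add_cancel]
  rw [prod_congr rfl hfactor, prod_div_distrib, prod_mul_distrib, prod_const, Nat.card_Icc,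
    prod_pow_eq_pow_sum, ← sum_mul, sum_Icc_id_mul_two, show m + k + 1 - (m + 1) = k by omega]
  ring

theorem stiefel_volume_ge_ball_general (n k : ℕ) (hkn : k ≤ n) :
    (2 * Real.sqrt π) ^ k *
        Real.Gamma (((k : ℝ) * (2 * (n : ℝ) - (k : ℝ))) / 2 + 1) ≥
      ∏ i ∈ Finset.Icc (n - k + 1) n, Real.Gamma (i : ℝ) ∧
    (∏ i ∈ Finset.Icc (n - k + 1) n, 2 * π ^ (i : ℕ) / (Nat.factorial (i - 1) : ℝ)) /
        (π ^ (((k * (2 * n - k) : ℕ) : ℝ) / 2) /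
          Real.Gamma (((k * (2 * n - k) : ℕ) : ℝ) / 2 + 1)) ≥ 1 := by
  obtain ⟨m, rfl⟩ : ∃ m, n = m + k := ⟨n - k, by omega⟩
  have hΓ : ((k : ℝ) * (2 * (m + k : ℕ) - k)) / 2 + 1 = k * (2 * m + k) / 2 + 1 := by
    push_cast
    ring
  have key := prod_Gamma_Icc_le m k
  rw [Nat.add_sub_cancel, show 2 * (m + k) - k = 2 * m + k by omega, hΓ]
  refine ⟨key, ?_⟩
  have hG : 0 < Gamma (k * (2 * m + k) / 2 + 1) := Gamma_pos_of_pos (by positivity)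
  rw [prod_two_mul_pi_pow_div_factorial_Icc, rpow_div_two_eq_sqrt _ pi_pos.le, rpow_natCast,
    Nat.cast_mul, Nat.cast_add, Nat.cast_mul, Nat.cast_two, ge_iff_le,
    one_le_div₀ (by positivity), div_le_div_iff₀ hG (prod_Gamma_Icc_pos m k)]
  calc √π ^ (k * (2 * m + k)) * ∏ i ∈ Icc (m + 1) (m + k), Gamma i
      ≤ √π ^ (k * (2 * m + k)) * ((2 * √π) ^ k * Gamma (k * (2 * m + k) / 2 + 1)) := by gcongr
    _ = (2 * √π) ^ k * √π ^ (k * (2 * m + k)) * Gamma (k * (2 * m + k) / 2 + 1) := by ring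

/-- The total volume of the complex Stiefel manifold `V_{k,n}` is at least the volume of
the unit ball in `ℝ^D`, `D = k(2n−k)`: equivalently,
`(2√π)^k · Γ(k(2n−k)/2 + 1) ≥ ∏_{i=n−k+1}^{n} Γ(i)`. -/
theorem stiefel_volume_ge_ball (n k : ℕ) (hk : 1 ≤ k) (hkn : k ≤ n) :
    (2 * Real.sqrt π) ^ k *
        Real.Gamma (((k : ℝ) * (2 * (n : ℝ) - (k : ℝ))) / 2 + 1) ≥
      ∏ i ∈ Finset.Icc (n - k + 1) n, Real.Gamma (i : ℝ) ∧
    (∏ i ∈ Finset.Icc (n - k + 1) n, 2 * π ^ (i : ℕ) / (Nat.factorial (i - 1) : ℝ)) /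
        (π ^ (((k * (2 * n - k) : ℕ) : ℝ) / 2) /
          Real.Gamma (((k * (2 * n - k) : ℕ) : ℝ) / 2 + 1)) ≥ 1 :=
  stiefel_volume_ge_ball_general n k hkn
end

section
/- For all natural numbers k ≥ 1 and n ≥ k+1, one has Γ(k(n−k) + 1) · ∏_{j=1}^{k} Γ(j) ≥ ∏_{i=n−k+1}^{n} Γ(i), with equality when n = k+1. Equivalently, the total volume of the complex Grassmann manifold, vol G_{k,n} = ∏_{i=n−k+1}^{n} (2π^i/(i−1)!) / ∏_{j=1}^{k} (2π^j/(j−1)!), is at least the volume |B^D| = π^{D/2}/Γ(D/2+1) of the unit ball in ℝ^D with D = 2k(n−k), i.e. vol G_{k,n}/|B^{2k(n−k)}| ≥ 1. -/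
open Real Finset

lemma fact_ratio (a b : ℕ) (h : b ≤ a) :
    ∀ m, a.factorial * (b + m).factorial ≤ (a + m).factorial * b.factorial := by
  intro m
  induction m with
  | zero => simp [Nat.mul_comm]
  | succ m ih =>
      have h1 : b + m + 1 ≤ a + m + 1 := by omega
      calc a.factorial * (b + (m+1)).factorial
          = (b + m + 1) * (a.factorial * (b + m).factorial) := by
            rw [show b + (m+1) = (b+m)+1 from rfl, Nat.factorial_succ]; ring
        _ ≤ (a + m + 1) * ((a + m).factorial * b.factorial) :=
            Nat.mul_le_mul h1 ih
        _ = (a + (m+1)).factorial * b.factorial := by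
            rw [show a + (m+1) = (a+m)+1 from rfl, Nat.factorial_succ]; ring

lemma key_nat (m : ℕ) (hm : 1 ≤ m) :
    ∀ k, (∏ i ∈ Finset.Icc (m+1) (m+k), (i-1).factorial)
      ≤ (k*m).factorial * ∏ j ∈ Finset.Icc 1 k, (j-1).factorial := by
  intro k
  induction k with
  | zero => simp
  | succ k ih =>
      rw [show m + (k+1) = (m+k)+1 from rfl,
        Finset.prod_Icc_succ_top (by omega : m+1 ≤ m+k+1),
        Finset.prod_Icc_succ_top (by omega : 1 ≤ k+1)]
      have h1 : (m+k+1) - 1 = m + k := by omega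
      have h2 : (k+1) - 1 = k := by omega
      rw [h1, h2]
      calc (∏ i ∈ Finset.Icc (m+1) (m+k), (i-1).factorial) * (m+k).factorial
          ≤ ((k*m).factorial * ∏ j ∈ Finset.Icc 1 k, (j-1).factorial) * (m+k).factorial :=
            Nat.mul_le_mul_right _ ih
        _ = ((k*m).factorial * (k + m).factorial) * ∏ j ∈ Finset.Icc 1 k, (j-1).factorial := by
            ring_nf
        _ ≤ ((k*m + m).factorial * k.factorial) * ∏ j ∈ Finset.Icc 1 k, (j-1).factorial := by
            exact Nat.mul_le_mul_right _ (fact_ratio (k*m) k (Nat.le_mul_of_pos_right k hm) m)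
        _ = ((k+1)*m).factorial * ((∏ j ∈ Finset.Icc 1 k, (j-1).factorial) * k.factorial) := by
            rw [show (k+1)*m = k*m + m by ring]; ring

lemma key_eq (k : ℕ) :
    (k*1).factorial * ∏ j ∈ Finset.Icc 1 k, (j-1).factorial
      = ∏ i ∈ Finset.Icc 2 (k+1), (i-1).factorial := by
  induction k with
  | zero => simp
  | succ k ih =>
      rw [Finset.prod_Icc_succ_top (by omega : 1 ≤ k+1),
        show (k+1)+1 = (k+1)+1 from rfl,
        Finset.prod_Icc_succ_top (by omega : 2 ≤ k+1+1)]
      have h1 : (k+1) - 1 = k := by omega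
      have h2 : (k+1+1) - 1 = k+1 := by omega
      rw [h1, h2, show (k+1)*1 = k+1 by ring, Nat.factorial_succ]
      rw [show k*1 = k by ring] at ih
      calc (k+1) * k.factorial * ((∏ j ∈ Finset.Icc 1 k, (j-1).factorial) * k.factorial)
          = (k.factorial * ∏ j ∈ Finset.Icc 1 k, (j-1).factorial) * ((k+1) * k.factorial) := by ring
        _ = (∏ i ∈ Finset.Icc 2 (k+1), (i-1).factorial) * ((k+1) * k.factorial) := by rw [ih]
        _ = (∏ i ∈ Finset.Icc 2 (k+1), (i-1).factorial) * (k+1).factorial := by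
            rw [Nat.factorial_succ]

lemma prod_gamma (a b : ℕ) (ha : 1 ≤ a) :
    ∏ i ∈ Finset.Icc a b, Real.Gamma (i : ℝ)
      = ((∏ i ∈ Finset.Icc a b, (i-1).factorial : ℕ) : ℝ) := by
  rw [Nat.cast_prod]
  refine Finset.prod_congr rfl fun i hi => ?_
  have hi1 : 1 ≤ i := le_trans ha (Finset.mem_Icc.mp hi).1
  have : (i : ℝ) = ((i - 1 : ℕ) : ℝ) + 1 := by
    have h : i - 1 + 1 = i := by omega
    rw [← h]; push_cast; ring
  rw [this, Real.Gamma_nat_eq_factorial]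

lemma sum_shift (m : ℕ) : ∀ k, ∑ i ∈ Finset.Icc (m+1) (m+k), i
    = k*m + ∑ j ∈ Finset.Icc 1 k, j := by
  intro k
  induction k with
  | zero => simp
  | succ k ih =>
      rw [show m + (k+1) = (m+k)+1 from rfl,
        Finset.sum_Icc_succ_top (by omega : m+1 ≤ m+k+1),
        Finset.sum_Icc_succ_top (by omega : 1 ≤ k+1), ih]
      ring

/-- The total volume of the complex Grassmann manifold `G_{k,n}` is at least the volume of
the unit ball in `ℝ^D`, `D = 2k(n−k)`: equivalently,
`Γ(k(n−k)+1) · ∏_{j=1}^{k} Γ(j) ≥ ∏_{i=n−k+1}^{n} Γ(i)`, with equality when `n = k+1`. -/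
theorem grassmann_volume_ge_ball (n k : ℕ) (hk : 1 ≤ k) (hkn : k + 1 ≤ n) :
    Real.Gamma ((k * (n - k) : ℕ) + 1) * (∏ j ∈ Finset.Icc 1 k, Real.Gamma (j : ℝ)) ≥
      ∏ i ∈ Finset.Icc (n - k + 1) n, Real.Gamma (i : ℝ) ∧
    (n = k + 1 →
      Real.Gamma ((k * (n - k) : ℕ) + 1) * (∏ j ∈ Finset.Icc 1 k, Real.Gamma (j : ℝ)) =
        ∏ i ∈ Finset.Icc (n - k + 1) n, Real.Gamma (i : ℝ)) ∧
    ((∏ i ∈ Finset.Icc (n - k + 1) n, 2 * π ^ (i : ℕ) / (Nat.factorial (i - 1) : ℝ)) /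
        (∏ j ∈ Finset.Icc 1 k, 2 * π ^ (j : ℕ) / (Nat.factorial (j - 1) : ℝ))) /
      (π ^ (((2 * k * (n - k) : ℕ) : ℝ) / 2) /
        Real.Gamma (((2 * k * (n - k) : ℕ) : ℝ) / 2 + 1)) ≥ 1 := by
  obtain ⟨m, rfl⟩ : ∃ m, n = m + k := ⟨n - k, by omega⟩
  have hmk : m + k - k = m := by omega
  have hm : 1 ≤ m := by omega
  rw [hmk]
  have hGam : Real.Gamma ((k * m : ℕ) + 1) = ((k*m).factorial : ℝ) := by
    exact_mod_cast Real.Gamma_nat_eq_factorial (k*m)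
  have hPj := prod_gamma 1 k le_rfl
  have hPi := prod_gamma (m+1) (m+k) (by omega)
  have hkey := key_nat m hm k
  constructor
  · rw [hGam, hPj, hPi, ← Nat.cast_mul]
    exact_mod_cast hkey
  constructor
  · intro hn
    have hm1 : m = 1 := by omega
    subst hm1
    rw [hGam, hPj, hPi, ← Nat.cast_mul]
    have hIcc : Finset.Icc (1+1) (1+k) = Finset.Icc 2 (k+1) := by
      rw [Nat.add_comm 1 k]
    rw [hIcc]
    exact_mod_cast key_eq k
  · have hhalf : (((2 * k * m : ℕ) : ℝ)) / 2 = ((k * m : ℕ) : ℝ) := by push_cast; ring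
    rw [hhalf, hGam, Real.rpow_natCast]
    have hcard1 : (Finset.Icc (m+1) (m+k)).card = k := by
      rw [Nat.card_Icc]; omega
    have hcard2 : (Finset.Icc 1 k).card = k := by
      rw [Nat.card_Icc]; omega
    have hA : (∏ i ∈ Finset.Icc (m+1) (m+k), 2 * π ^ (i : ℕ) / ((i-1).factorial : ℝ))
        = 2^k * π^(∑ i ∈ Finset.Icc (m+1) (m+k), i)
          / ((∏ i ∈ Finset.Icc (m+1) (m+k), (i-1).factorial : ℕ) : ℝ) := by
      rw [Finset.prod_div_distrib, Finset.prod_mul_distrib, Finset.prod_const,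
        Finset.prod_pow_eq_pow_sum, Nat.cast_prod, hcard1]
    have hB : (∏ j ∈ Finset.Icc 1 k, 2 * π ^ (j : ℕ) / ((j-1).factorial : ℝ))
        = 2^k * π^(∑ j ∈ Finset.Icc 1 k, j)
          / ((∏ j ∈ Finset.Icc 1 k, (j-1).factorial : ℕ) : ℝ) := by
      rw [Finset.prod_div_distrib, Finset.prod_mul_distrib, Finset.prod_const,
        Finset.prod_pow_eq_pow_sum, Nat.cast_prod, hcard2]
    rw [hA, hB]
    have hS : ∑ i ∈ Finset.Icc (m+1) (m+k), i = k*m + ∑ j ∈ Finset.Icc 1 k, j :=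
      sum_shift m k
    rw [hS, pow_add]
    set Pi : ℕ := ∏ i ∈ Finset.Icc (m+1) (m+k), (i-1).factorial with hPidef
    set Pj : ℕ := ∏ j ∈ Finset.Icc 1 k, (j-1).factorial with hPjdef
    have hPipos : (0:ℝ) < (Pi : ℝ) := by
      exact_mod_cast Finset.prod_pos fun i _ => Nat.factorial_pos _
    have hPjpos : (0:ℝ) < (Pj : ℝ) := by
      exact_mod_cast Finset.prod_pos fun j _ => Nat.factorial_pos _
    have hGpos : (0:ℝ) < (((k*m).factorial : ℕ) : ℝ) := by
      exact_mod_cast Nat.factorial_pos _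
    have hpi := Real.pi_pos
    have hmain : (2^k * (π^(k*m) * π^(∑ j ∈ Finset.Icc 1 k, j)) / (Pi:ℝ))
        / (2^k * π^(∑ j ∈ Finset.Icc 1 k, j) / (Pj:ℝ))
        / (π^(k*m) / (((k*m).factorial : ℕ) : ℝ))
        = (((k*m).factorial : ℝ) * (Pj:ℝ)) / (Pi:ℝ) := by
      field_simp
    rw [hmain, ge_iff_le, le_div_iff₀ hPipos, one_mul]
    exact_mod_cast hkey
end

section
/- Fix k ≥ 1 and let D_{n,k} = k(2n−k). Then lim_{n→∞} [ (2√π)^k · Γ(D_{n,k}/2 + 1) / ∏_{i=n−k+1}^{n} Γ(i) ]^{1/D_{n,k}} = √k. Equivalently, (vol V_{k,n}/|B^{D_{n,k}}|)^{1/D_{n,k}} → √k as n → ∞. -/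
/-!
Stirling's formula in the crude form `log m! = m log m - m + o(m)` gives, for `a > 0` and fixed
`c`, `log (a N + c)! = a N log N + (a log a - a) N + o(N)`; by monotonicity of `Γ` on `[2, ∞)` the
same holds for `log Γ(y + 1)` whenever `y` lies within `1` above `a N + c`. Writing `n = N + k`, one
has `D = k (2N + k)` and `∏_{i=n-k+1}^{n} Γ(i) = ∏_{j<k} (N + j)!`, so in the logarithm of the ratio
the terms `k N log N` and `-k N` cancel and `k N log k + o(N)` is left. Dividing by `D ~ 2kN`
gives `(log k) / 2`.
-/

open Real Finset Filter Topology
open scoped Nat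

theorem tendsto_log_natCast_div_self :
    Tendsto (fun N : ℕ => log N / N) atTop (𝓝 0) := by
  simpa [Function.comp_def] using
    (tendsto_pow_log_div_mul_add_atTop 1 0 1 one_ne_zero).comp tendsto_natCast_atTop_atTop

theorem tendsto_log_factorial_div_sub_log :
    Tendsto (fun m : ℕ => log (m ! : ℝ) / m - log m) atTop (𝓝 (-1)) := by
  have hs : Tendsto (fun m : ℕ => (log (Stirling.stirlingSeq m) + log 2 / 2) / m) atTop (𝓝 0) :=
    ((Stirling.tendsto_stirlingSeq_sqrt_pi.log (by positivity)).add_const _).div_atTop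
      tendsto_natCast_atTop_atTop
  have h := (hs.add (tendsto_log_natCast_div_self.const_mul (1 / 2))).sub_const 1
  rw [mul_zero, add_zero, zero_sub] at h
  refine h.congr' ?_
  filter_upwards [eventually_ge_atTop 1] with m hm
  have hm0 : (m : ℝ) ≠ 0 := by positivity
  rw [Stirling.log_stirlingSeq_formula, log_mul two_ne_zero hm0, log_div hm0 (exp_ne_zero 1),
    log_exp]
  field_simp
  ring

theorem tendsto_log_factorial_mul_add_div_sub (a c : ℕ) (ha : 0 < a) :
    Tendsto (fun N : ℕ => log ((a * N + c)! : ℝ) / N - a * log N) atTop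
      (𝓝 (a * log a - a)) := by
  have hm : Tendsto (fun N : ℕ => a * N + c) atTop atTop :=
    tendsto_atTop_mono (fun N => by simp only [id]; nlinarith) tendsto_id
  have hmN : Tendsto (fun N : ℕ => ((a * N + c : ℕ) : ℝ) / N) atTop (𝓝 a) := by
    have h := (tendsto_const_div_atTop_nhds_zero_nat (c : ℝ)).const_add (a : ℝ)
    rw [add_zero] at h
    refine h.congr' ?_
    filter_upwards [eventually_ge_atTop 1] with N hN
    push_cast
    field_simp
  -- with `m = a N + c`: `log m! / N - a log N`
  -- `= (m / N) (log m! / m - log m) + (m / N) log (m / N) + c (log N / N)`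
  have h := ((hmN.mul (tendsto_log_factorial_div_sub_log.comp hm)).add
    ((continuous_mul_log.tendsto _).comp hmN)).add (tendsto_log_natCast_div_self.const_mul (c : ℝ))
  rw [mul_zero, add_zero, mul_neg_one, neg_add_eq_sub] at h
  refine h.congr' ?_
  filter_upwards [eventually_ge_atTop 1] with N hN
  have hN0 : (N : ℝ) ≠ 0 := by positivity
  have hm0 : ((a * N + c : ℕ) : ℝ) ≠ 0 := by positivity
  simp only [Function.comp_apply]
  rw [log_div hm0 hN0]
  push_cast at hm0 ⊢
  field_simp
  ring

theorem log_Gamma_add_one_mem_Icc {m : ℕ} {y : ℝ} (hm : 1 ≤ m) (hy : y ∈ Set.Icc (m : ℝ) (m + 1)) :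
    log (Gamma (y + 1)) ∈ Set.Icc (log (m ! : ℝ)) (log ((m + 1)! : ℝ)) := by
  have hm1 : (1 : ℝ) ≤ m := by exact_mod_cast hm
  have hmono := Gamma_strictMonoOn_Ici.monotoneOn
  have hlow : Gamma (m + 1) ≤ Gamma (y + 1) :=
    hmono (by simp; linarith) (by simp; linarith [hy.1]) (by linarith [hy.1])
  have hupp : Gamma (y + 1) ≤ Gamma ((m + 1 : ℕ) + 1) :=
    hmono (by simp; linarith [hy.1]) (by simp; linarith) (by push_cast; linarith [hy.2])
  rw [Gamma_nat_eq_factorial] at hlow hupp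
  exact ⟨log_le_log (by positivity) hlow,
    log_le_log (Gamma_pos_of_pos (by linarith [hy.1])) hupp⟩

theorem tendsto_log_Gamma_add_one_div_sub (a c : ℕ) (ha : 0 < a) {y : ℕ → ℝ}
    (hy : ∀ N, y N ∈ Set.Icc ((a * N + c : ℕ) : ℝ) ((a * N + c : ℕ) + 1)) :
    Tendsto (fun N : ℕ => log (Gamma (y N + 1)) / N - a * log N) atTop
      (𝓝 (a * log a - a)) := by
  refine tendsto_of_tendsto_of_tendsto_of_le_of_le'
    (tendsto_log_factorial_mul_add_div_sub a c ha)
    (tendsto_log_factorial_mul_add_div_sub a (c + 1) ha) ?_ ?_ <;>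
  filter_upwards [eventually_ge_atTop 1] with N hN <;>
  obtain ⟨hlow, hupp⟩ := log_Gamma_add_one_mem_Icc (by nlinarith) (hy N)
  · gcongr
  · exact sub_le_sub_right (div_le_div_of_nonneg_right hupp N.cast_nonneg) _

theorem tendsto_rpow_one_div_of_tendsto_log_div {α : Type*} {l : Filter α} {x d : α → ℝ}
    {L : ℝ} (hx : ∀ᶠ i in l, 0 < x i) (h : Tendsto (fun i => log (x i) / d i) l (𝓝 L)) :
    Tendsto (fun i => x i ^ (1 / d i)) l (𝓝 (exp L)) := by
  refine ((continuous_exp.tendsto L).comp h).congr' ?_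
  filter_upwards [hx] with i hi
  rw [Function.comp_apply, rpow_def_of_pos hi, mul_one_div]

theorem tendsto_log_stiefel_ratio_div (k : ℕ) (hk : 0 < k) :
    Tendsto (fun N : ℕ => log ((2 * √π) ^ k * Gamma (((k * (2 * N + k) : ℕ) : ℝ) / 2 + 1) /
      ∏ j ∈ range k, ((N + j)! : ℝ)) / N) atTop (𝓝 (k * log k)) := by
  have hhalf : ∀ N : ℕ, ((k * (2 * N + k) : ℕ) : ℝ) / 2 ∈
      Set.Icc ((k * N + k * k / 2 : ℕ) : ℝ) ((k * N + k * k / 2 : ℕ) + 1) := by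
    intro N
    have h₁ : ((2 * (k * k / 2) : ℕ) : ℝ) ≤ ((k * k : ℕ) : ℝ) := by
      exact_mod_cast Nat.mul_div_le _ _
    have h₂ : ((k * k : ℕ) : ℝ) ≤ ((2 * (k * k / 2) + 1 : ℕ) : ℝ) := by
      exact_mod_cast (by omega : k * k ≤ 2 * (k * k / 2) + 1)
    push_cast at h₁ h₂ ⊢
    constructor <;> linarith
  have hΓ := tendsto_log_Gamma_add_one_div_sub k (k * k / 2) hk hhalf
  have hfact (j : ℕ) : Tendsto (fun N : ℕ => log ((N + j)! : ℝ) / N - log N) atTop (𝓝 (-1)) := by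
    simpa using tendsto_log_factorial_mul_add_div_sub 1 j one_pos
  have h := ((tendsto_const_div_atTop_nhds_zero_nat (k * log (2 * √π))).add hΓ).sub
    (tendsto_finsetSum (range k) fun j _ => hfact j)
  rw [zero_add, sum_const, card_range, nsmul_eq_mul, mul_neg_one, sub_neg_eq_add,
    sub_add_cancel] at h
  refine h.congr' ?_
  filter_upwards [eventually_ge_atTop 1] with N hN
  rw [log_div (by positivity) (by positivity), log_mul (by positivity) (Gamma_pos_of_pos
    (by positivity)).ne', log_pow, log_prod fun j _ => by positivity, sum_sub_distrib, sum_const,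
    card_range, nsmul_eq_mul, ← sum_div]
  field_simp
  ring

theorem tendsto_stiefel_dim_div (k : ℕ) :
    Tendsto (fun N : ℕ => ((k * (2 * N + k) : ℕ) : ℝ) / N) atTop (𝓝 (2 * k)) := by
  have h := (tendsto_const_div_atTop_nhds_zero_nat ((k : ℝ) * k)).const_add (2 * (k : ℝ))
  rw [add_zero] at h
  refine h.congr' ?_
  filter_upwards [eventually_ge_atTop 1] with N hN
  push_cast
  field_simp

/-- Asymptotics of the Stiefel volume-to-ball ratio: with `D_{n,k} = k(2n−k)`,
`[(2√π)^k · Γ(D_{n,k}/2 + 1) / ∏_{i=n−k+1}^{n} Γ(i)]^{1/D_{n,k}} → √k` as `n → ∞`. -/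
theorem stiefel_volume_ratio_limit (k : ℕ) (hk : 1 ≤ k) :
    Tendsto
      (fun n : ℕ =>
        ((2 * Real.sqrt π) ^ k *
            Real.Gamma (((k * (2 * n - k) : ℕ) : ℝ) / 2 + 1) /
          ∏ i ∈ Finset.Icc (n - k + 1) n, Real.Gamma (i : ℝ)) ^
          (1 / ((k * (2 * n - k) : ℕ) : ℝ)))
      atTop (nhds (Real.sqrt k)) := by
  rw [← tendsto_add_atTop_iff_nat k]
  have hdim (N : ℕ) : 2 * (N + k) - k = 2 * N + k := by omega
  have hprod (N : ℕ) : ∏ i ∈ Icc (N + 1) (N + k), Gamma (i : ℝ) = ∏ j ∈ range k, ((N + j)! : ℝ) := by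
    rw [← Ico_add_one_right_eq_Icc, prod_Ico_eq_prod_range, show N + k + 1 - (N + 1) = k by omega]
    refine prod_congr rfl fun j _ => ?_
    rw [show N + 1 + j = (N + j) + 1 by omega, Nat.cast_succ, Gamma_nat_eq_factorial]
  simp only [hdim, Nat.add_sub_cancel, hprod]
  have hsqrt : √(k : ℝ) = exp (k * log k / (2 * k)) := by
    rw [show (k : ℝ) * log k / (2 * k) = log k / 2 by field_simp, ← log_sqrt (by positivity),
      exp_log (by positivity)]
  rw [hsqrt]
  have hlog := (tendsto_log_stiefel_ratio_div k hk).div (tendsto_stiefel_dim_div k)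
    (by positivity)
  refine tendsto_rpow_one_div_of_tendsto_log_div (Eventually.of_forall fun N => by positivity)
    (hlog.congr' ?_)
  filter_upwards [eventually_ge_atTop 1] with N hN
  rw [Pi.div_apply]
  field_simp
end

section
/- Fix k ≥ 1 and let D_{n,k} = 2k(n−k). Then lim_{n→∞} [ Γ(D_{n,k}/2 + 1) · ∏_{j=1}^{k} Γ(j) / ∏_{i=n−k+1}^{n} Γ(i) ]^{1/D_{n,k}} = √k. Equivalently, (vol G_{k,n}/|B^{D_{n,k}}|)^{1/D_{n,k}} → √k as n → ∞. -/
/-!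
Write `n = m + k`. The bracket becomes `u m = (k m)! C / ∏_{j<k} (m + j)!` with `C = ∏_{j=1}^k Γ(j)`,
and its consecutive ratios `u (m+1) / u m = ∏_{i<k} (k m + 1 + i) / (m + 1 + i)` tend to `k^k`.
Cesàro's theorem applied to `log u` turns this into `u m ^ (1/m) → k^k`, and the exponent
`1 / D = 1 / (2 k m)` takes the `2k`-th root of that limit, `√k`.
-/

open Real Finset Filter Topology Nat

theorem tendsto_div_natCast_of_tendsto_sub_succ {x : ℕ → ℝ} {L : ℝ}
    (h : Tendsto (fun m ↦ x (m + 1) - x m) atTop (𝓝 L)) :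
    Tendsto (fun m : ℕ ↦ x m / m) atTop (𝓝 L) := by
  have hx0 : Tendsto (fun m : ℕ ↦ x 0 / m) atTop (𝓝 0) := tendsto_const_div_atTop_nhds_zero_nat _
  refine (add_zero L ▸ h.cesaro.add hx0).congr fun m ↦ ?_
  rw [sum_range_sub]
  ring

theorem tendsto_rpow_one_div_of_tendsto_div_succ {u : ℕ → ℝ} {L : ℝ} (hu : ∀ m, 0 < u m)
    (hL : 0 < L) (h : Tendsto (fun m ↦ u (m + 1) / u m) atTop (𝓝 L)) :
    Tendsto (fun m : ℕ ↦ u m ^ (1 / (m : ℝ))) atTop (𝓝 L) := by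
  have hlog : Tendsto (fun m ↦ log (u (m + 1)) - log (u m)) atTop (𝓝 (log L)) :=
    ((continuousAt_log hL.ne').tendsto.comp h).congr fun m ↦ log_div (hu _).ne' (hu _).ne'
  refine (exp_log hL ▸ (continuous_exp.tendsto _).comp
    (tendsto_div_natCast_of_tendsto_sub_succ (x := fun m ↦ log (u m)) hlog)).congr fun m ↦ ?_
  rw [rpow_def_of_pos (hu m), Function.comp_apply, mul_one_div]

theorem tendsto_ascFactorial_mul_div_ascFactorial (k : ℕ) :
    Tendsto (fun m : ℕ ↦ ((k * m + 1).ascFactorial k : ℝ) / (m + 1).ascFactorial k) atTop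
      (𝓝 ((k : ℝ) ^ k)) := by
  have hfactor (i : ℕ) :
      Tendsto (fun m : ℕ ↦ ((1 + i : ℝ) + k * m) / ((1 + i) + 1 * m)) atTop (𝓝 (k : ℝ)) := by
    simpa using tendsto_add_mul_div_add_mul_atTop_nhds (1 + i : ℝ) (1 + i) k one_ne_zero
  have := tendsto_finsetProd (range k) fun i _ ↦ hfactor i
  rw [prod_const, card_range] at this
  refine this.congr fun m ↦ ?_
  simp only [ascFactorial_eq_prod_range, cast_prod, ← prod_div_distrib]
  refine prod_congr rfl fun i _ ↦ ?_
  push_cast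
  ring

theorem prod_factorial_add_succ (m k : ℕ) :
    ∏ j ∈ range k, (m + 1 + j)! = (∏ j ∈ range k, (m + j)!) * (m + 1).ascFactorial k := by
  rw [ascFactorial_eq_prod_range, ← prod_mul_distrib]
  refine prod_congr rfl fun j _ ↦ ?_
  rw [add_right_comm, factorial_succ]
  ring

theorem factorial_mul_div_prod_factorial_succ (k m : ℕ) :
    ((k * (m + 1))! : ℝ) / ∏ j ∈ range k, ((m + 1 + j)! : ℝ) =
      (k * m)! / (∏ j ∈ range k, ((m + j)! : ℝ)) *
        ((k * m + 1).ascFactorial k / (m + 1).ascFactorial k) := by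
  have hnum : (k * (m + 1))! = (k * m)! * (k * m + 1).ascFactorial k := by
    rw [factorial_mul_ascFactorial, mul_add_one]
  have hden := congrArg (Nat.cast (R := ℝ)) (prod_factorial_add_succ m k)
  push_cast at hden
  rw [hden, hnum]
  push_cast
  have : (0 : ℝ) < ∏ j ∈ range k, ((m + j)! : ℝ) := by positivity
  have : (0 : ℝ) < (m + 1).ascFactorial k := by positivity
  field_simp

theorem tendsto_factorial_mul_div_prod_factorial_rpow {k : ℕ} (hk : 0 < k) {C : ℝ} (hC : 0 < C) :
    Tendsto (fun m : ℕ ↦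
        ((k * m)! * C / ∏ j ∈ range k, ((m + j)! : ℝ)) ^ (1 / ((2 * k * m : ℕ) : ℝ)))
      atTop (𝓝 √k) := by
  set u : ℕ → ℝ := fun m ↦ (k * m)! * C / ∏ j ∈ range k, ((m + j)! : ℝ)
  have hu (m : ℕ) : 0 < u m := by positivity
  have hratio : Tendsto (fun m ↦ u (m + 1) / u m) atTop (𝓝 ((k : ℝ) ^ k)) := by
    refine (tendsto_ascFactorial_mul_div_ascFactorial k).congr fun m ↦ ?_
    have := (hu m).ne'
    simp only [u, mul_div_right_comm _ C, factorial_mul_div_prod_factorial_succ] at this ⊢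
    field_simp
  have hroot := tendsto_rpow_one_div_of_tendsto_div_succ hu (by positivity) hratio
  have hlim : ((k : ℝ) ^ k) ^ (1 / (2 * k : ℝ)) = √k := by
    rw [← rpow_natCast, ← rpow_mul (by positivity), sqrt_eq_rpow]
    field_simp
  refine (hlim ▸ (continuousAt_rpow_const _ _ (Or.inl (by positivity))).tendsto.comp hroot).congr
    fun m ↦ ?_
  rw [Function.comp_apply, ← rpow_mul (hu m).le]
  congr 1
  push_cast
  ring

theorem Gamma_natCast_two_mul_div_two_add_one (n : ℕ) :
    Gamma (((2 * n : ℕ) : ℝ) / 2 + 1) = n ! := by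
  rw [← Gamma_nat_eq_factorial]
  push_cast
  ring_nf

theorem prod_Icc_Gamma_natCast (m k : ℕ) :
    ∏ i ∈ Icc (m + 1) (m + k), Gamma (i : ℝ) = ∏ j ∈ range k, ((m + j)! : ℝ) := by
  rw [← Ico_add_one_right_eq_Icc, prod_Ico_eq_prod_range, show m + k + 1 - (m + 1) = k by omega]
  refine prod_congr rfl fun j _ ↦ ?_
  rw [← Gamma_nat_eq_factorial]
  push_cast
  ring_nf

/-- Asymptotics of the Grassmann volume-to-ball ratio: with `D_{n,k} = 2k(n−k)`,
`[Γ(D_{n,k}/2 + 1) · ∏_{j=1}^{k} Γ(j) / ∏_{i=n−k+1}^{n} Γ(i)]^{1/D_{n,k}} → √k`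
as `n → ∞`. -/
theorem grassmann_volume_ratio_limit (k : ℕ) (hk : 1 ≤ k) :
    Tendsto
      (fun n : ℕ =>
        (Real.Gamma (((2 * k * (n - k) : ℕ) : ℝ) / 2 + 1) *
            (∏ j ∈ Finset.Icc 1 k, Real.Gamma (j : ℝ)) /
          ∏ i ∈ Finset.Icc (n - k + 1) n, Real.Gamma (i : ℝ)) ^
          (1 / ((2 * k * (n - k) : ℕ) : ℝ)))
      atTop (nhds (Real.sqrt k)) := by
  have hC : 0 < ∏ j ∈ Icc 1 k, Gamma (j : ℝ) :=
    prod_pos fun j hj ↦ Gamma_pos_of_pos (by exact_mod_cast (mem_Icc.1 hj).1)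
  refine ((tendsto_factorial_mul_div_prod_factorial_rpow hk hC).comp
    (tendsto_sub_atTop_nat k)).congr' ?_
  filter_upwards [eventually_ge_atTop k] with n hn
  obtain ⟨m, rfl⟩ : ∃ m, n = m + k := ⟨n - k, by omega⟩
  rw [Function.comp_apply, Nat.add_sub_cancel, mul_assoc 2, Gamma_natCast_two_mul_div_two_add_one,
    prod_Icc_Gamma_natCast]
end

section
/- Fix k ≥ 1 and R > 0. For n ≥ k let D = k(2n−k), vol V_{k,n} = ∏_{i=n−k+1}^{n} 2π^i/(i−1)!, |B^D| = π^{D/2}/Γ(D/2+1), and define the Gilbert–Varshamov radius r̲₀(n) = (2^{−nR} · vol V_{k,n}/|B^D|)^{1/D}. Then (i) r̲₀(n) ≥ (1/2)^{nR/D} for every n ≥ k, with this lower bound monotonically increasing in n, and (ii) lim_{n→∞} r̲₀(n) = √(k · 2^{−R/k}) = √(k/2^{R/k}). -/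
/-!
Write `n = p + k` and `S = ∑_{t<k} (p + t)`, so that `D = 2S + k`. Then
`vol V_{k,n} / |B^D| = 2^k π^{k/2} · (Γ(S + k/2 + 1) / S!) · (S; p, p+1, …, p+k-1)`,
a multinomial coefficient. The Gamma factor is at least `1/(k/2 + 1) ≥ 2^{-k}` and the
multinomial coefficient is at least `1`, so the ratio is at least `1`: this is (i), and (ii) only
says that `n/D` decreases. For the limit, Stirling's formula `log m! = m log m - m + o(m)` gives
`log (S; p, …, p+k-1) = ∑_t (p+t) log (S/(p+t)) + o(p) = k p log k + o(p)`, while the Gamma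
factor grows polynomially. Dividing by `D ~ 2kp` yields `r̲₀(n) → 2^{-R/(2k)} √k`.
-/

open Real Finset Filter

/-- Total volume of the complex Stiefel manifold `V_{k,n}`. -/
noncomputable def stiefelVol (k n : ℕ) : ℝ :=
  ∏ i ∈ Finset.Icc (n - k + 1) n, 2 * π ^ (i : ℕ) / (Nat.factorial (i - 1) : ℝ)

/-- Volume of the unit ball in `ℝ^m`. -/
noncomputable def unitBallVol (m : ℕ) : ℝ :=
  π ^ ((m : ℝ) / 2) / Real.Gamma ((m : ℝ) / 2 + 1)

/-- The Gilbert–Varshamov radius for packings of cardinality `2^{nR}` in `V_{k,n}`,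
obtained from the flat comparison volume `|B^D| r^D = vol V_{k,n} / 2^{nR}`,
`D = k(2n−k)`. -/
noncomputable def gvRadiusStiefel (k : ℕ) (R : ℝ) (n : ℕ) : ℝ :=
  ((2 : ℝ) ^ (-(n : ℝ) * R) * stiefelVol k n / unitBallVol (k * (2 * n - k))) ^
    (1 / ((k * (2 * n - k) : ℕ) : ℝ))

open Topology
open scoped Nat

noncomputable def logFactorialError (m : ℕ) : ℝ := log (m ! : ℝ) - (m * log m - m)

lemma logFactorialError_eq_log_stirlingSeq_add (m : ℕ) :
    logFactorialError m = log (Stirling.stirlingSeq m) + log (2 * m) / 2 := by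
  rcases m.eq_zero_or_pos with rfl | hm
  · simp [logFactorialError]
  have := Stirling.log_stirlingSeq_formula m
  rw [log_div (by positivity) (exp_ne_zero 1), log_exp] at this
  rw [logFactorialError, this]
  ring

lemma tendsto_logFactorialError_div :
    Tendsto (fun m : ℕ => logFactorialError m / m) atTop (𝓝 0) := by
  have hs : Tendsto (fun m : ℕ => log (Stirling.stirlingSeq m) * (1 / m)) atTop (𝓝 0) := by
    simpa using ((continuousAt_log (by positivity)).tendsto.comp
      Stirling.tendsto_stirlingSeq_sqrt_pi).mul tendsto_one_div_atTop_nhds_zero_nat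
  have hl : Tendsto (fun m : ℕ => log (2 * m) ^ 1 / (1 * (2 * m) + 0)) atTop (𝓝 0) :=
    (tendsto_pow_log_div_mul_add_atTop 1 0 1 one_ne_zero).comp
      (tendsto_natCast_atTop_atTop.const_mul_atTop two_pos)
  simpa using (hs.add hl).congr fun m => by rw [logFactorialError_eq_log_stirlingSeq_add]; ring

lemma tendsto_comp_div_natCast {f : ℕ → ℝ} (hf : Tendsto (fun m : ℕ => f m / m) atTop (𝓝 0))
    {u : ℕ → ℕ} {c : ℝ} (hu : Tendsto u atTop atTop)
    (huc : Tendsto (fun p => (u p : ℝ) / p) atTop (𝓝 c)) :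
    Tendsto (fun p => f (u p) / p) atTop (𝓝 0) := by
  have h := (hf.comp hu).mul huc
  rw [zero_mul] at h
  refine h.congr' ?_
  filter_upwards [hu.eventually_ne_atTop 0] with p hp
  have : (u p : ℝ) ≠ 0 := by exact_mod_cast hp
  simp only [Function.comp_apply]
  field_simp

lemma log_multinomial_eq {ι : Type*} (s : Finset ι) (f : ι → ℕ) (hf : ∀ i ∈ s, f i ≠ 0) :
    log (Nat.multinomial s f) = ∑ i ∈ s, f i * log ((∑ j ∈ s, f j : ℕ) / f i) +
      logFactorialError (∑ i ∈ s, f i) - ∑ i ∈ s, logFactorialError (f i) := by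
  have hspec := congrArg (fun m : ℕ => log (m : ℝ)) (Nat.multinomial_spec s f)
  simp only [Nat.cast_mul, Nat.cast_prod] at hspec
  rw [log_mul (prod_ne_zero_iff.mpr fun i _ => by positivity)
      (by exact_mod_cast (Nat.multinomial_pos s f).ne'),
    log_prod fun i _ => by positivity] at hspec
  have hsum : (∑ i ∈ s, f i * log ((∑ j ∈ s, f j : ℕ) / f i) : ℝ) =
      (∑ j ∈ s, f j : ℕ) * log (∑ j ∈ s, f j : ℕ) - ∑ i ∈ s, f i * log (f i) := by
    rw [Nat.cast_sum, sum_mul, ← sum_sub_distrib]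
    refine sum_congr rfl fun i hi => ?_
    have hfi : (f i : ℝ) ≠ 0 := by exact_mod_cast hf i hi
    have hS : (∑ j ∈ s, f j : ℝ) ≠ 0 := by
      exact_mod_cast (Nat.pos_of_ne_zero (hf i hi)).trans_le (single_le_sum (by simp) hi) |>.ne'
    rw [log_div hS hfi]
    ring
  simp only [logFactorialError, hsum, sum_sub_distrib] at hspec ⊢
  push_cast at hspec ⊢
  linarith

lemma tendsto_natCast_add_div (a : ℕ) :
    Tendsto (fun p : ℕ => ((p + a : ℕ) : ℝ) / p) atTop (𝓝 1) := by
  simpa [add_comm] using tendsto_add_mul_div_add_mul_atTop_nhds (a : ℝ) 0 1 one_ne_zero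

lemma tendsto_sum_add_div {ι : Type*} (s : Finset ι) (a : ι → ℕ) :
    Tendsto (fun p : ℕ => ((∑ j ∈ s, (p + a j) : ℕ) : ℝ) / p) atTop (𝓝 #s) := by
  simpa [sum_add_distrib, add_comm] using
    tendsto_add_mul_div_add_mul_atTop_nhds ((∑ j ∈ s, a j : ℕ) : ℝ) 0 (#s : ℝ) one_ne_zero

lemma tendsto_sum_add_div_mul_log_div {ι : Type*} {s : Finset ι} (hs : s.Nonempty)
    (a : ι → ℕ) :
    Tendsto (fun p : ℕ => ∑ i ∈ s, ((p + a i : ℕ) : ℝ) / p *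
      log (((∑ j ∈ s, (p + a j) : ℕ) : ℝ) / (p + a i : ℕ))) atTop (𝓝 (#s * log #s)) := by
  have hratio (i : ι) :
      Tendsto (fun p : ℕ => ((∑ j ∈ s, (p + a j) : ℕ) : ℝ) / (p + a i : ℕ)) atTop (𝓝 #s) := by
    refine (((tendsto_sum_add_div s a).div (tendsto_natCast_add_div (a i)) one_ne_zero).congr'
      ?_).trans (by rw [div_one])
    filter_upwards [eventually_ne_atTop 0] with p hp
    have : (p : ℝ) ≠ 0 := by exact_mod_cast hp
    have : ((p + a i : ℕ) : ℝ) ≠ 0 := by exact_mod_cast (by omega : p + a i ≠ 0)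
    simp only [Pi.div_apply]
    field_simp
  have hcard : (#s : ℝ) ≠ 0 := by exact_mod_cast hs.card_pos.ne'
  simpa using tendsto_finsetSum s fun i _ =>
    (tendsto_natCast_add_div (a i)).mul ((continuousAt_log hcard).tendsto.comp (hratio i))

theorem tendsto_log_multinomial_add_div {ι : Type*} (s : Finset ι) (a : ι → ℕ) :
    Tendsto (fun p : ℕ => log (Nat.multinomial s (fun i => p + a i)) / p) atTop
      (𝓝 (#s * log #s)) := by
  rcases s.eq_empty_or_nonempty with rfl | hs
  · simp
  have hmain := tendsto_sum_add_div_mul_log_div hs a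
  obtain ⟨i₀, hi₀⟩ := hs
  have hsum_le (p : ℕ) : p ≤ ∑ j ∈ s, (p + a j) :=
    (Nat.le_add_right p (a i₀)).trans (single_le_sum (f := fun j => p + a j) (by simp) hi₀)
  have hsum_err := tendsto_comp_div_natCast tendsto_logFactorialError_div
    (tendsto_atTop_mono hsum_le tendsto_id) (tendsto_sum_add_div s a)
  have herr := tendsto_finsetSum s fun i _ => tendsto_comp_div_natCast
    tendsto_logFactorialError_div (tendsto_atTop_mono (fun p => Nat.le_add_right p (a i))
      tendsto_id) (tendsto_natCast_add_div (a i))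
  have h := (hmain.add hsum_err).sub herr
  rw [sum_const_zero, add_zero, sub_zero] at h
  refine h.congr' ?_
  filter_upwards [eventually_ne_atTop 0] with p hp
  rw [log_multinomial_eq s _ fun i _ => by omega, sub_div, add_div, sum_div, sum_div]
  congr 2
  exact sum_congr rfl fun i _ => div_mul_eq_mul_div _ _ _

lemma Gamma_le_Gamma_of_two_le {x y : ℝ} (hx : 2 ≤ x) (hxy : x ≤ y) : Gamma x ≤ Gamma y :=
  Gamma_strictMonoOn_Ici.monotoneOn hx (hx.trans hxy) hxy

lemma factorial_le_mul_Gamma_add (m : ℕ) {y : ℝ} (hy : 0 ≤ y) :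
    (m ! : ℝ) ≤ (y + 1) * Gamma (m + y + 1) := by
  have hm : (0 : ℝ) ≤ m := m.cast_nonneg
  -- `Gamma` is monotone only on `[2, ∞)`, hence the detour through `(m + 1)!`.
  have hmono : ((m + 1 : ℕ) ! : ℝ) ≤ (m + y + 1) * Gamma (m + y + 1) := by
    rw [← Gamma_add_one (by positivity), ← Gamma_nat_eq_factorial]
    exact Gamma_le_Gamma_of_two_le (by push_cast; linarith) (by push_cast; linarith)
  rw [Nat.factorial_succ, Nat.cast_mul] at hmono
  have hΓ : 0 < Gamma (m + y + 1) := Gamma_pos_of_pos (by positivity)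
  have : (m + y + 1) * Gamma (m + y + 1) ≤ ((m + 1 : ℕ) : ℝ) * ((y + 1) * Gamma (m + y + 1)) := by
    push_cast; nlinarith [mul_nonneg (mul_nonneg hm hy) hΓ.le]
  exact le_of_mul_le_mul_left (hmono.trans this) (by positivity)

lemma Nat.factorial_add_le_mul_pow (m k : ℕ) : (m + k)! ≤ m ! * (m + k) ^ k := by
  rw [← Nat.factorial_mul_ascFactorial]
  exact Nat.mul_le_mul_left _ (Nat.ascFactorial_le_pow_add m k)

lemma Gamma_add_le_factorial_mul_pow (m j : ℕ) {y : ℝ} (hy : 0 ≤ y) (hyj : y ≤ j) :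
    Gamma (m + y + 1) ≤ m ! * (m + j + 1) ^ (j + 1) := by
  have hm : (0 : ℝ) ≤ m := m.cast_nonneg
  calc Gamma (m + y + 1) ≤ (m + y + 1) * Gamma (m + y + 1) :=
        le_mul_of_one_le_left (Gamma_pos_of_pos (by positivity)).le (by linarith)
    _ ≤ Gamma ((m + j + 1 : ℕ) + 1) := by
        rw [← Gamma_add_one (by positivity)]
        exact Gamma_le_Gamma_of_two_le (by linarith) (by push_cast; linarith)
    _ ≤ m ! * (m + j + 1) ^ (j + 1) := by
        rw [Gamma_nat_eq_factorial]
        exact_mod_cast Nat.factorial_add_le_mul_pow m (j + 1)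

lemma tendsto_log_Gamma_add_div_factorial_div {y : ℝ} (hy : 0 ≤ y) :
    Tendsto (fun m : ℕ => log (Gamma (m + y + 1) / m !) / m) atTop (𝓝 0) := by
  set j := ⌈y⌉₊
  have hlow : Tendsto (fun m : ℕ => -log (y + 1) / m) atTop (𝓝 0) :=
    tendsto_const_div_atTop_nhds_zero_nat _
  have hup : Tendsto (fun m : ℕ => ((j : ℝ) + 1) *
      (log ((m : ℝ) + (j + 1)) ^ 1 / (1 * ((m : ℝ) + (j + 1)) + -((j : ℝ) + 1))))
      atTop (𝓝 (((j : ℝ) + 1) * 0)) :=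
    ((tendsto_pow_log_div_mul_add_atTop 1 (-((j : ℝ) + 1)) 1 one_ne_zero).comp
      (tendsto_atTop_add_const_right _ _ tendsto_natCast_atTop_atTop)).const_mul _
  rw [mul_zero] at hup
  refine tendsto_of_tendsto_of_tendsto_of_le_of_le hlow hup (fun m => ?_) (fun m => ?_)
  · have hΓ : 0 < Gamma (m + y + 1) := Gamma_pos_of_pos (by positivity)
    refine div_le_div_of_nonneg_right ?_ m.cast_nonneg
    rw [← log_inv, ← one_div]
    refine log_le_log (by positivity) ?_
    rw [div_le_div_iff₀ (by positivity) (by positivity), one_mul]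
    exact (factorial_le_mul_Gamma_add m hy).trans_eq (mul_comm _ _)
  · have hΓ : 0 < Gamma (m + y + 1) := Gamma_pos_of_pos (by positivity)
    have hbound : log (Gamma (m + y + 1) / m !) ≤ ((j : ℝ) + 1) * log ((m : ℝ) + (j + 1)) := by
      rw [← Nat.cast_succ, ← Real.log_pow]
      refine log_le_log (by positivity) ?_
      rw [div_le_iff₀ (by positivity), mul_comm, Nat.cast_succ, ← add_assoc]
      exact_mod_cast Gamma_add_le_factorial_mul_pow m j hy (Nat.le_ceil y)
    calc log (Gamma (m + y + 1) / m !) / m ≤ ((j : ℝ) + 1) * log ((m : ℝ) + (j + 1)) / m :=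
          div_le_div_of_nonneg_right hbound m.cast_nonneg
      _ = _ := by simp only [pow_one, one_mul, add_neg_cancel_right, mul_div_assoc]
lemma stiefelDim_add_eq (k p : ℕ) :
    k * (2 * (p + k) - k) = 2 * ∑ t ∈ range k, (p + t) + k := by
  have hgauss := Finset.sum_range_id_mul_two k
  rw [sum_add_distrib, sum_const, card_range, smul_eq_mul]
  rw [show 2 * (p + k) - k = 2 * p + k by omega]
  cases k with
  | zero => simp
  | succ k => simp only [Nat.add_sub_cancel] at hgauss; nlinarith

lemma stiefelVol_add (k p : ℕ) :
    stiefelVol k (p + k) = 2 ^ k * π ^ (∑ t ∈ range k, (p + t) + k) /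
      ∏ t ∈ range k, ((p + t)! : ℝ) := by
  rw [stiefelVol, Nat.add_sub_cancel, ← Ico_add_one_right_eq_Icc, prod_Ico_eq_prod_range,
    show p + k + 1 - (p + 1) = k by omega]
  calc ∏ t ∈ range k, 2 * π ^ (p + 1 + t) / ((p + 1 + t - 1)! : ℝ)
      = ∏ t ∈ range k, 2 * π ^ (p + t + 1) / ((p + t)! : ℝ) :=
        prod_congr rfl fun t _ => by rw [show p + 1 + t - 1 = p + t by omega, add_right_comm]
    _ = _ := by
        rw [prod_div_distrib, prod_mul_distrib, prod_const, card_range, prod_pow_eq_pow_sum,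
          sum_add_distrib, sum_const, card_range, smul_eq_mul, mul_one]

lemma stiefelVol_div_unitBallVol (k p : ℕ) :
    stiefelVol k (p + k) / unitBallVol (k * (2 * (p + k) - k)) =
      2 ^ k * π ^ ((k : ℝ) / 2) *
        (Gamma ((∑ t ∈ range k, (p + t) : ℕ) + (k : ℝ) / 2 + 1) / (∑ t ∈ range k, (p + t))!) *
        Nat.multinomial (range k) (fun t => p + t) := by
  have hD : ((k * (2 * (p + k) - k) : ℕ) : ℝ) / 2 = (∑ t ∈ range k, (p + t) : ℕ) + (k : ℝ) / 2 := by
    rw [stiefelDim_add_eq]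
    push_cast
    ring
  set S := ∑ t ∈ range k, (p + t)
  have hspec : (∏ t ∈ range k, ((p + t)! : ℝ)) * Nat.multinomial (range k) (fun t => p + t) =
      (S ! : ℝ) := by
    exact_mod_cast Nat.multinomial_spec (range k) (fun t => p + t)
  have hπ : π ^ (S + k) = π ^ ((S : ℝ) + k / 2) * π ^ ((k : ℝ) / 2) := by
    rw [← rpow_add pi_pos, ← rpow_natCast, Nat.cast_add]
    ring_nf
  have hΓ : 0 < Gamma (S + (k : ℝ) / 2 + 1) := Gamma_pos_of_pos (by positivity)
  have hM : (0 : ℝ) < Nat.multinomial (range k) (fun t => p + t) := by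
    exact_mod_cast Nat.multinomial_pos _ _
  have hP : (0 : ℝ) < ∏ t ∈ range k, ((p + t)! : ℝ) := by positivity
  rw [stiefelVol_add, unitBallVol, hD, ← hspec, hπ]
  field_simp

lemma one_le_stiefelVol_div_unitBallVol {k n : ℕ} (hkn : k ≤ n) :
    1 ≤ stiefelVol k n / unitBallVol (k * (2 * n - k)) := by
  obtain ⟨p, rfl⟩ : ∃ p, n = p + k := ⟨n - k, by omega⟩
  rw [stiefelVol_div_unitBallVol]
  set S := ∑ t ∈ range k, (p + t)
  have hy : (0 : ℝ) ≤ k / 2 := by positivity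
  have h2k : (k : ℝ) / 2 + 1 ≤ 2 ^ k := by
    have : (k : ℝ) + 1 ≤ 2 ^ k := by exact_mod_cast Nat.lt_two_pow_self
    linarith
  have hΓ : 1 / ((k : ℝ) / 2 + 1) ≤ Gamma (S + (k : ℝ) / 2 + 1) / S ! := by
    rw [div_le_div_iff₀ (by positivity) (by positivity), one_mul]
    exact (factorial_le_mul_Gamma_add S hy).trans_eq (mul_comm _ _)
  have hM : (1 : ℝ) ≤ Nat.multinomial (range k) (fun t => p + t) := by
    exact_mod_cast Nat.multinomial_pos _ _
  calc (1 : ℝ) = ((k : ℝ) / 2 + 1) * 1 * (1 / ((k : ℝ) / 2 + 1)) * 1 := by field_simp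
    _ ≤ _ := by
      gcongr
      exact one_le_rpow (by linarith [pi_gt_three]) hy

lemma gvRadiusStiefel_eq_half_rpow_mul (k : ℕ) (R : ℝ) (n : ℕ) :
    gvRadiusStiefel k R n = ((1 : ℝ) / 2) ^ ((n : ℝ) * R / ((k * (2 * n - k) : ℕ) : ℝ)) *
      (stiefelVol k n / unitBallVol (k * (2 * n - k))) ^ (1 / ((k * (2 * n - k) : ℕ) : ℝ)) := by
  have hV : 0 ≤ stiefelVol k n := prod_nonneg fun i _ => by positivity
  have hB : 0 ≤ unitBallVol (k * (2 * n - k)) :=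
    div_nonneg (rpow_nonneg pi_pos.le _) (Gamma_nonneg_of_nonneg (by positivity))
  rw [gvRadiusStiefel, mul_div_assoc, mul_rpow (by positivity) (div_nonneg hV hB),
    ← rpow_mul zero_le_two, one_div 2, inv_rpow zero_le_two, ← rpow_neg zero_le_two]
  ring_nf

lemma cast_stiefelDim_add (k p : ℕ) :
    ((k * (2 * (p + k) - k) : ℕ) : ℝ) = k * (2 * p + k) := by
  rw [show 2 * (p + k) - k = 2 * p + k by omega]
  push_cast
  ring

lemma tendsto_add_div_stiefelDim {k : ℕ} (hk : 0 < k) (a : ℕ) :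
    Tendsto (fun p : ℕ => ((p + a : ℕ) : ℝ) / ((k * (2 * (p + k) - k) : ℕ) : ℝ)) atTop
      (𝓝 (1 / (2 * k))) := by
  refine (tendsto_add_mul_div_add_mul_atTop_nhds (a : ℝ) ((k : ℝ) ^ 2) 1 (d := 2 * k)
    (by positivity)).congr fun p => ?_
  rw [cast_stiefelDim_add]
  push_cast
  ring

lemma tendsto_log_stiefelVol_div_unitBallVol_div {k : ℕ} (hk : 0 < k) :
    Tendsto (fun p : ℕ => log (stiefelVol k (p + k) / unitBallVol (k * (2 * (p + k) - k))) /
      ((k * (2 * (p + k) - k) : ℕ) : ℝ)) atTop (𝓝 (log k / 2)) := by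
  set S : ℕ → ℕ := fun p => ∑ t ∈ range k, (p + t)
  have hS : Tendsto S atTop atTop :=
    tendsto_atTop_mono (fun p => single_le_sum (f := fun t => p + t) (fun _ _ => Nat.zero_le _)
      (mem_range.mpr hk)) tendsto_id
  have hSdiv : Tendsto (fun p : ℕ => (S p : ℝ) / p) atTop (𝓝 k) := by
    simpa only [card_range] using tendsto_sum_add_div (range k) (fun t => t)
  have hconst := tendsto_const_div_atTop_nhds_zero_nat (log (2 ^ k * π ^ ((k : ℝ) / 2)))
  have hΓ := tendsto_comp_div_natCast
    (tendsto_log_Gamma_add_div_factorial_div (y := k / 2) (by positivity)) hS hSdiv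
  have hM := tendsto_log_multinomial_add_div (range k) (fun t => t)
  -- `log (V / B) / D = (c / p + log (Γ(S + k/2 + 1) / S!) / p + log (multinomial) / p) * (p / D)`
  have h := ((hconst.add hΓ).add hM).mul (tendsto_add_div_stiefelDim hk 0)
  rw [zero_add, zero_add, card_range, show (k * log k : ℝ) * (1 / (2 * k)) = log k / 2 by
    field_simp] at h
  refine h.congr' ?_
  filter_upwards [eventually_ne_atTop 0] with p hp
  have hp' : (p : ℝ) ≠ 0 := by exact_mod_cast hp
  have hΓS : Gamma (S p + (k : ℝ) / 2 + 1) / (S p)! ≠ 0 :=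
    (div_pos (Gamma_pos_of_pos (by positivity)) (by positivity)).ne'
  have hMp : (Nat.multinomial (range k) (fun t => p + t) : ℝ) ≠ 0 := by
    exact_mod_cast (Nat.multinomial_pos _ _).ne'
  rw [stiefelVol_div_unitBallVol, log_mul (by positivity) hMp, log_mul (by positivity) hΓS,
    Nat.add_zero]
  field_simp

lemma tendsto_stiefelVol_div_unitBallVol_rpow {k : ℕ} (hk : 0 < k) :
    Tendsto (fun p : ℕ => (stiefelVol k (p + k) / unitBallVol (k * (2 * (p + k) - k))) ^
      (1 / ((k * (2 * (p + k) - k) : ℕ) : ℝ))) atTop (𝓝 (√k)) := by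
  have h := (continuous_exp.tendsto _).comp (tendsto_log_stiefelVol_div_unitBallVol_div hk)
  rw [sqrt_eq_rpow, rpow_def_of_pos (by exact_mod_cast hk), mul_one_div]
  refine h.congr fun p => ?_
  rw [Function.comp_apply, rpow_def_of_pos
    (zero_lt_one.trans_le (one_le_stiefelVol_div_unitBallVol (Nat.le_add_left k p))), mul_one_div]

lemma tendsto_half_rpow_mul_div_stiefelDim {k : ℕ} (hk : 0 < k) (R : ℝ) :
    Tendsto (fun p : ℕ => ((1 : ℝ) / 2) ^
      (((p + k : ℕ) : ℝ) * R / ((k * (2 * (p + k) - k) : ℕ) : ℝ))) atTop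
      (𝓝 (√((2 : ℝ) ^ (-R / k)))) := by
  have h := (continuousAt_const_rpow (a := (1 : ℝ) / 2) (by norm_num)).tendsto.comp
    ((tendsto_add_div_stiefelDim hk k).const_mul R)
  have hlim : (1 / 2 : ℝ) ^ (R * (1 / (2 * k))) = √((2 : ℝ) ^ (-R / k)) := by
    rw [sqrt_eq_rpow, ← rpow_mul zero_le_two, one_div 2, inv_rpow zero_le_two,
      ← rpow_neg zero_le_two]
    ring_nf
  rw [hlim] at h
  refine h.congr fun p => ?_
  rw [Function.comp_apply, mul_div_assoc', mul_comm]

lemma div_stiefelDim_le_of_le {k m n : ℕ} (hk : 0 < k) (hkm : k ≤ m) (hmn : m ≤ n) :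
    (n : ℝ) / ((k * (2 * n - k) : ℕ) : ℝ) ≤ (m : ℝ) / ((k * (2 * m - k) : ℕ) : ℝ) := by
  have hkR : (0 : ℝ) < k := by exact_mod_cast hk
  have hmR : (k : ℝ) ≤ m := by exact_mod_cast hkm
  have hmnR : (m : ℝ) ≤ n := by exact_mod_cast hmn
  rw [Nat.cast_mul, Nat.cast_mul, Nat.cast_sub (by omega), Nat.cast_sub (by omega),
    div_le_div_iff₀ (by push_cast; nlinarith) (by push_cast; nlinarith)]
  push_cast
  nlinarith [mul_le_mul_of_nonneg_left hmnR (mul_nonneg hkR.le hkR.le)]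

/-- **Gilbert–Varshamov lower bound for the Stiefel manifold.** For fixed `k ≥ 1` and rate
`R > 0`: (i) `r̲₀(n) ≥ (1/2)^{nR/D}` for all `n ≥ k`, the latter bound being monotone
increasing in `n`; (ii) `r̲₀(n) → √(k·2^{−R/k})` as `n → ∞`. -/
theorem gv_radius_stiefel_bound_and_limit (k : ℕ) (hk : 1 ≤ k) (R : ℝ) (hR : 0 < R) :
    (∀ n : ℕ, k ≤ n →
      ((1 : ℝ) / 2) ^ ((n : ℝ) * R / ((k * (2 * n - k) : ℕ) : ℝ)) ≤
        gvRadiusStiefel k R n) ∧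
    (∀ m n : ℕ, k ≤ m → m ≤ n →
      ((1 : ℝ) / 2) ^ ((m : ℝ) * R / ((k * (2 * m - k) : ℕ) : ℝ)) ≤
        ((1 : ℝ) / 2) ^ ((n : ℝ) * R / ((k * (2 * n - k) : ℕ) : ℝ))) ∧
    Tendsto (gvRadiusStiefel k R) atTop
      (nhds (Real.sqrt ((k : ℝ) * (2 : ℝ) ^ (-R / (k : ℝ))))) := by
  refine ⟨fun n hn => ?_, fun m n hm hmn => ?_, ?_⟩
  · rw [gvRadiusStiefel_eq_half_rpow_mul]
    exact le_mul_of_one_le_right (by positivity)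
      (one_le_rpow (one_le_stiefelVol_div_unitBallVol hn) (by positivity))
  · refine rpow_le_rpow_of_exponent_ge (by norm_num) (by norm_num) ?_
    simpa only [mul_div_right_comm] using
      mul_le_mul_of_nonneg_right (div_stiefelDim_le_of_le hk hm hmn) hR.le
  · rw [← tendsto_add_atTop_iff_nat k, sqrt_mul (Nat.cast_nonneg k), mul_comm]
    refine ((tendsto_half_rpow_mul_div_stiefelDim hk R).mul
      (tendsto_stiefelVol_div_unitBallVol_rpow hk)).congr fun p => ?_
    rw [gvRadiusStiefel_eq_half_rpow_mul]
end

section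
/- Let n ≥ 2k ≥ 2. There exist constants δ > 0 and α > 0 such that for every skew-Hermitian matrix X ∈ ℂ^{n×n} of the block form X = [[A, −B†], [B, 0]] with A ∈ ℂ^{k×k} skew-Hermitian and B ∈ ℂ^{(n−k)×k}, if (1/√2)·‖X‖_F ≤ δ then (1/√2)·‖X‖_F ≤ α·‖exp(X)·Ψ₀ − Ψ₀‖_F, where Ψ₀ = [1_k; 0] ∈ ℂ^{n×k}. In particular, locally on the Stiefel manifold the geodesic distance r^V is bounded above by α times the chordal distance d^V. -/
/-! The first-order term of `exp X Ψ₀ - Ψ₀` is `XΨ₀ = [A; B]`, and since `B` occurs twice in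
`X = [[A, -Bᴴ], [B, 0]]` but only once in `XΨ₀`, it satisfies `‖X‖_F / √2 ≤ ‖XΨ₀‖_F`. The
remainder `(exp X - 1 - X)Ψ₀` is at most `‖X‖_F² ‖Ψ₀‖_F` once `‖X‖_F ≤ 1`, which for `X` small
compared with `1 / ‖Ψ₀‖_F` is at most half of the lower bound; hence `α = 2`. -/

open Matrix

/-- The base point `Ψ₀ = [1_k; 0]` of the Stiefel manifold, with rows indexed by
`Fin k ⊕ Fin m` (so the ambient dimension is `n = k + m`). -/
def basePoint (k m : ℕ) : Matrix (Fin k ⊕ Fin m) (Fin k) ℂ :=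
  Matrix.of fun i j => Sum.elim (fun i' => if i' = j then (1 : ℂ) else 0) (fun _ => 0) i

theorem norm_exp_sub_one_sub_le {𝔸 : Type*} [NormedRing 𝔸] [NormedAlgebra ℚ 𝔸]
    [CompleteSpace 𝔸] (x : 𝔸) :
    ‖NormedSpace.exp x - 1 - x‖ ≤ Real.exp ‖x‖ - 1 - ‖x‖ := by
  have hx := (hasSum_nat_add_iff' 2).2 (NormedSpace.exp_series_hasSum_exp' (𝕂 := ℚ) x)
  have hr := (hasSum_nat_add_iff' 2).2 (NormedSpace.expSeries_div_hasSum_exp ‖x‖)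
  simp only [Finset.sum_range_succ, Finset.sum_range_zero, ← Real.exp_eq_exp_ℝ] at hx hr
  norm_num [sub_sub] at hx hr ⊢
  -- compare the tails of the two exponential series term by term
  refine hx.norm_le_of_bounded hr fun n => ?_
  rw [norm_smul, norm_inv, ← Rat.norm_cast_real, Rat.cast_natCast, Real.norm_natCast,
    div_eq_inv_mul]
  gcongr
  exact norm_pow_le' x (n + 1).succ_pos

theorem norm_exp_sub_one_sub_le_sq {𝔸 : Type*} [NormedRing 𝔸] [NormedAlgebra ℚ 𝔸]
    [CompleteSpace 𝔸] {x : 𝔸} (hx : ‖x‖ ≤ 1) :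
    ‖NormedSpace.exp x - 1 - x‖ ≤ ‖x‖ ^ 2 := by
  refine (norm_exp_sub_one_sub_le x).trans ((le_abs_self _).trans ?_)
  exact Real.abs_exp_sub_one_sub_id_le (by rwa [abs_norm])

theorem frobNorm_nonneg {p q : Type*} [Fintype p] [Fintype q] (M : Matrix p q ℂ) :
    0 ≤ frobNorm M :=
  Real.sqrt_nonneg _

theorem frobNorm_sq {p q : Type*} [Fintype p] [Fintype q] (M : Matrix p q ℂ) :
    frobNorm M ^ 2 = ∑ i, ∑ j, ‖M i j‖ ^ 2 :=
  Real.sq_sqrt <| Finset.sum_nonneg fun _ _ => Finset.sum_nonneg fun _ _ => sq_nonneg _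

section Frobenius

open scoped Matrix.Norms.Frobenius

theorem frobNorm_eq_norm {m n : Type*} [Fintype m] [Fintype n] (M : Matrix m n ℂ) :
    frobNorm M = ‖M‖ := by
  simp only [frobNorm, frobenius_norm_def, Real.sqrt_eq_rpow, Real.rpow_two]

theorem norm_mul_le_norm_exp_mul_sub_add_sq {𝕜 n p : Type*} [RCLike 𝕜] [Fintype n]
    [DecidableEq n] [Fintype p] {X : Matrix n n 𝕜} (hX : ‖X‖ ≤ 1) (Ψ : Matrix n p 𝕜) :
    ‖X * Ψ‖ ≤ ‖NormedSpace.exp X * Ψ - Ψ‖ + ‖X‖ ^ 2 * ‖Ψ‖ := by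
  have hsplit : X * Ψ = (NormedSpace.exp X * Ψ - Ψ) - (NormedSpace.exp X - 1 - X) * Ψ := by
    simp only [Matrix.sub_mul, Matrix.one_mul]
    abel
  calc ‖X * Ψ‖ ≤ ‖NormedSpace.exp X * Ψ - Ψ‖ + ‖(NormedSpace.exp X - 1 - X) * Ψ‖ :=
        hsplit ▸ norm_sub_le _ _
    _ ≤ ‖NormedSpace.exp X * Ψ - Ψ‖ + ‖NormedSpace.exp X - 1 - X‖ * ‖Ψ‖ := by
        gcongr
        exact frobenius_norm_mul _ _
    _ ≤ ‖NormedSpace.exp X * Ψ - Ψ‖ + ‖X‖ ^ 2 * ‖Ψ‖ := by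
        gcongr
        exact norm_exp_sub_one_sub_le_sq hX

end Frobenius

section BasePoint

variable {k m : ℕ}

theorem basePoint_eq_fromRows : basePoint k m = fromRows 1 0 := by
  ext (i | i) j <;> simp [basePoint, Matrix.one_apply]

theorem fromBlocks_mul_basePoint (A : Matrix (Fin k) (Fin k) ℂ) (B : Matrix (Fin k) (Fin m) ℂ)
    (C : Matrix (Fin m) (Fin k) ℂ) (D : Matrix (Fin m) (Fin m) ℂ) :
    fromBlocks A B C D * basePoint k m = fromRows A C := by
  simp [basePoint_eq_fromRows, fromBlocks_mul_fromRows]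

theorem one_div_sqrt_two_mul_frobNorm_horizontal_le (A : Matrix (Fin k) (Fin k) ℂ)
    (B : Matrix (Fin m) (Fin k) ℂ) :
    1 / Real.sqrt 2 * frobNorm (fromBlocks A (-Bᴴ) B 0) ≤ frobNorm (fromRows A B) := by
  have hsq : frobNorm (fromBlocks A (-Bᴴ) B 0) ^ 2 ≤ 2 * frobNorm (fromRows A B) ^ 2 := by
    simp only [frobNorm_sq, Fintype.sum_sum_type, fromBlocks_apply₁₁, fromBlocks_apply₁₂,
      fromBlocks_apply₂₁, fromBlocks_apply₂₂, fromRows_apply_inl, fromRows_apply_inr,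
      Matrix.neg_apply, conjTranspose_apply, norm_neg, norm_star, Matrix.zero_apply, norm_zero,
      Finset.sum_add_distrib]
    rw [Finset.sum_comm (f := fun i j => ‖B j i‖ ^ 2)]
    have hA_nonneg : 0 ≤ ∑ i, ∑ j, ‖A i j‖ ^ 2 := by positivity
    simp only [ne_eq, OfNat.ofNat_ne_zero, not_false_eq_true, zero_pow, Finset.sum_const_zero]
    linarith
  rw [one_div, inv_mul_le_iff₀ (by positivity)]
  calc frobNorm (fromBlocks A (-Bᴴ) B 0)
      = Real.sqrt (frobNorm (fromBlocks A (-Bᴴ) B 0) ^ 2) :=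
        (Real.sqrt_sq (frobNorm_nonneg _)).symm
    _ ≤ Real.sqrt (2 * frobNorm (fromRows A B) ^ 2) := Real.sqrt_le_sqrt hsq
    _ = Real.sqrt 2 * frobNorm (fromRows A B) := by
        rw [Real.sqrt_mul zero_le_two, Real.sqrt_sq (frobNorm_nonneg _)]

end BasePoint

theorem stiefel_geodesic_le_chordal_locally_general (k m : ℕ) :
    ∃ δ : ℝ, 0 < δ ∧ ∃ α : ℝ, 0 < α ∧
      ∀ (A : Matrix (Fin k) (Fin k) ℂ) (B : Matrix (Fin m) (Fin k) ℂ),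
        Aᴴ = -A →
        (1 / Real.sqrt 2) * frobNorm (Matrix.fromBlocks A (-Bᴴ) B 0) ≤ δ →
        (1 / Real.sqrt 2) * frobNorm (Matrix.fromBlocks A (-Bᴴ) B 0) ≤
          α * frobNorm
            (NormedSpace.exp (Matrix.fromBlocks A (-Bᴴ) B 0) * basePoint k m -
              basePoint k m) := by
  set Ψ := basePoint k m
  have hΨ : 0 ≤ frobNorm Ψ := frobNorm_nonneg Ψ
  refine ⟨1 / (4 * (frobNorm Ψ + 1)), by positivity, 2, two_pos, fun A B _ hδ => ?_⟩
  set X := fromBlocks A (-Bᴴ) B 0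
  set t := 1 / Real.sqrt 2 * frobNorm X
  have ht : 0 ≤ t := mul_nonneg (by positivity) (frobNorm_nonneg X)
  have hXt : frobNorm X ^ 2 = 2 * t ^ 2 := by
    simp only [t, mul_pow, div_pow, one_pow, Real.sq_sqrt zero_le_two]
    field_simp
  have htΨ : t * (4 * (frobNorm Ψ + 1)) ≤ 1 := (le_div_iff₀ (by positivity)).1 (by simpa using hδ)
  have hX : frobNorm X ≤ 1 := by nlinarith [frobNorm_nonneg X]
  have hlin : t ≤ frobNorm (X * Ψ) := by
    rw [fromBlocks_mul_basePoint]
    exact one_div_sqrt_two_mul_frobNorm_horizontal_le A B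
  have hrem : frobNorm (X * Ψ) ≤
      frobNorm (NormedSpace.exp X * Ψ - Ψ) + frobNorm X ^ 2 * frobNorm Ψ := by
    open scoped Matrix.Norms.Frobenius in
    simpa only [frobNorm_eq_norm] using
      norm_mul_le_norm_exp_mul_sub_add_sq (by rwa [← frobNorm_eq_norm]) Ψ
  have hquad : frobNorm X ^ 2 * frobNorm Ψ ≤ t / 2 := by
    rw [hXt]
    nlinarith [mul_nonneg ht hΨ]
  linarith [hlin.trans hrem]

/-- **Local equivalence of geodesic and chordal distances on the Stiefel manifold**
(the nontrivial direction, for `n ≥ 2k`, i.e. `m = n − k ≥ k ≥ 1`): there exist `δ, α > 0`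
such that for every horizontal tangent `X = [[A, −Bᴴ],[B, 0]]` (with `A` skew-Hermitian)
with `(1/√2)‖X‖_F ≤ δ`, one has `(1/√2)‖X‖_F ≤ α·‖exp(X)Ψ₀ − Ψ₀‖_F`, i.e. `rⱽ ≤ α·dⱽ`
locally. -/
theorem stiefel_geodesic_le_chordal_locally (k m : ℕ) (hk : 1 ≤ k) (hkm : k ≤ m) :
    ∃ δ : ℝ, 0 < δ ∧ ∃ α : ℝ, 0 < α ∧
      ∀ (A : Matrix (Fin k) (Fin k) ℂ) (B : Matrix (Fin m) (Fin k) ℂ),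
        Aᴴ = -A →
        (1 / Real.sqrt 2) * frobNorm (Matrix.fromBlocks A (-Bᴴ) B 0) ≤ δ →
        (1 / Real.sqrt 2) * frobNorm (Matrix.fromBlocks A (-Bᴴ) B 0) ≤
          α * frobNorm
            (NormedSpace.exp (Matrix.fromBlocks A (-Bᴴ) B 0) * basePoint k m -
              basePoint k m) :=
  stiefel_geodesic_le_chordal_locally_general k m
end
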